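/- arXiv:1305.4012 — 9 statements merged into one kernel-verified Lean document; each statement's English description precedes it below -/
import Mathlib

section
/- Let $a_1 \in (-1,0)$ and $a_2 \in (0,1)$. Define the domains $D_1 = \{(A_1,A_2) \in \mathbb{R}^2 : A_1 > 0,\ A_2 > 0,\ |A_1 - A_2| < A_1 a_2 - A_2 a_1\}$, $D_2^+ = \{(A_1,A_2) : A_1 > 0,\ A_2 > 0,\ |A_1 - A_2| \ge A_1 a_2 - A_2 a_1,\ A_1 > A_2\}$, and $D_2^- = \{(A_1,A_2) : A_1 > 0,\ A_2 > 0,\ |A_1 - A_2| \ge A_1 a_2 - A_2 a_1,\ A_2 > A_1\}$. Then $\frac{1}{4}\Big(\int_{D_1} e^{-\frac{A_1 a_2 - A_2 a_1}{a_2 - a_1}}\,dA + \int_{D_2^+} e^{-\frac{(A_1(a_2+1) - A_2(a_1+1))^2}{4(a_2-a_1)(A_1-A_2)}}\,dA + \int_{D_2^-} e^{-\frac{(A_2(1-a_1) - A_1(1-a_2))^2}{4(a_2-a_1)(A_2-A_1)}}\,dA\Big) = (a_2 - a_1)\Big(\frac{4}{3(1+a_2)^3} + \frac{4}{3(1-a_1)^3}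 + \frac{1}{6}\Big)$. -/
open Real MeasureTheory Set

/-!
On each domain the exponent is positively homogeneous of degree one in `A`, so each integral is
one of `exp (-(x * h (y / x)))` over a cone `m₁ x < y < m₂ x` (for `D₂⁺` up to a null ray; `D₂⁻`
is `D₂⁺` for `(-a₂, -a₁)` with the coordinates swapped). The substitution `(s, x) ↦ (x, s x)`,
of Jacobian `x`, together with `∫₀^∞ x e^{-c x} dx = c⁻²`, turns it into `∫_{m₁}^{m₂} h(s)⁻² ds`.
For `D₁` this integrand has the antiderivative `(a₂ - a₁)(s - 1)/(a₂ - s a₁)`; for `D₂⁺`, with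
`kᵢ = aᵢ + 1`, it has `-16(k₂ - k₁)/3 · t(s)³`, where `t(s) = (1 - s)/(k₂ - s k₁)` runs from
`1/k₂` at `s = 0` to `1/2` at the far edge of the cone.
-/

theorem ContinuousLinearMap.det_prod_smul_fst_add_smul_snd (a b c d : ℝ) :
    ((a • fst ℝ ℝ ℝ + b • snd ℝ ℝ ℝ).prod (c • fst ℝ ℝ ℝ + d • snd ℝ ℝ ℝ)).det
      = a * d - b * c := by
  rw [ContinuousLinearMap.det, ← LinearMap.det_toMatrix (Module.Basis.finTwoProd ℝ),
    Matrix.det_fin_two]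
  simp [LinearMap.toMatrix_apply]

theorem integral_mul_exp_neg_mul_Ioi {c : ℝ} (hc : 0 < c) :
    ∫ x in Ioi (0 : ℝ), x * exp (-(c * x)) = (c ^ 2)⁻¹ := by
  have h := integral_rpow_mul_exp_neg_mul_Ioi two_pos hc
  norm_num at h
  exact h

theorem integrableOn_mul_exp_neg_mul_Ioi {c : ℝ} (hc : 0 < c) :
    IntegrableOn (fun x => x * exp (-(c * x))) (Ioi (0 : ℝ)) :=
  .of_integral_ne_zero (by rw [integral_mul_exp_neg_mul_Ioi hc]; positivity)

def cone (m₁ m₂ : ℝ) : Set (ℝ × ℝ) := {p | 0 < p.1 ∧ m₁ * p.1 < p.2 ∧ p.2 < m₂ * p.1}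

theorem measurableSet_cone (m₁ m₂ : ℝ) : MeasurableSet (cone m₁ m₂) :=
  (measurableSet_lt measurable_const measurable_fst).inter
    ((measurableSet_lt (measurable_fst.const_mul m₁) measurable_snd).inter
      (measurableSet_lt measurable_snd (measurable_fst.const_mul m₂)))

theorem cone_eq_image (m₁ m₂ : ℝ) :
    cone m₁ m₂ = (fun q : ℝ × ℝ => (q.2, q.1 * q.2)) '' (Ioo m₁ m₂ ×ˢ Ioi 0) := by
  ext ⟨x, y⟩
  simp only [cone, mem_ofPred_eq, mem_image, mem_prod, mem_Ioo, mem_Ioi, Prod.exists,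
    Prod.mk.injEq]
  constructor
  · rintro ⟨hx, h₁, h₂⟩
    refine ⟨y / x, x, ⟨⟨?_, ?_⟩, hx⟩, rfl, by field_simp⟩
    · rwa [lt_div_iff₀ hx]
    · rwa [div_lt_iff₀ hx]
  · rintro ⟨s, x, ⟨⟨h₁, h₂⟩, hx⟩, rfl, rfl⟩
    exact ⟨hx, by nlinarith, by nlinarith⟩

theorem setIntegral_cone {E : Type*} [NormedAddCommGroup E] [NormedSpace ℝ E] (m₁ m₂ : ℝ)
    (f : ℝ × ℝ → E) :
    ∫ p in cone m₁ m₂, f p = ∫ q in Ioo m₁ m₂ ×ˢ Ioi 0, q.2 • f (q.2, q.1 * q.2) := by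
  have hS : MeasurableSet (Ioo m₁ m₂ ×ˢ Ioi (0 : ℝ)) := measurableSet_Ioo.prod measurableSet_Ioi
  have hderiv : ∀ q ∈ Ioo m₁ m₂ ×ˢ Ioi (0 : ℝ),
      HasFDerivWithinAt (fun q : ℝ × ℝ => (q.2, q.1 * q.2))
        (((0 : ℝ) • ContinuousLinearMap.fst ℝ ℝ ℝ + (1 : ℝ) • ContinuousLinearMap.snd ℝ ℝ ℝ).prod
          (q.2 • ContinuousLinearMap.fst ℝ ℝ ℝ + q.1 • ContinuousLinearMap.snd ℝ ℝ ℝ))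
        (Ioo m₁ m₂ ×ˢ Ioi 0) q := fun q _ =>
    ((hasFDerivAt_snd.prodMk (hasFDerivAt_fst.mul hasFDerivAt_snd)).congr_fderiv
      (by ext <;> simp)).hasFDerivWithinAt
  have hinj : InjOn (fun q : ℝ × ℝ => (q.2, q.1 * q.2)) (Ioo m₁ m₂ ×ˢ Ioi 0) := by
    rintro ⟨s, x⟩ ⟨-, hx⟩ ⟨s', x'⟩ - h
    obtain ⟨rfl, h⟩ := Prod.mk.inj h
    exact Prod.ext (mul_right_cancel₀ (ne_of_gt hx) h) rfl
  rw [cone_eq_image, integral_image_eq_integral_abs_det_fderiv_smul volume hS hderiv hinj]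
  refine setIntegral_congr_fun hS fun q ⟨_, hx⟩ => ?_
  rw [ContinuousLinearMap.det_prod_smul_fst_add_smul_snd]
  simp [abs_of_pos hx.out]

theorem integrableOn_Ioo_prod_Ioi_mul_exp_neg {m₁ m₂ : ℝ} (hm : m₁ ≤ m₂) {h : ℝ → ℝ}
    (hcont : ContinuousOn h (Icc m₁ m₂)) (hpos : ∀ s ∈ Icc m₁ m₂, 0 < h s) :
    IntegrableOn (fun q : ℝ × ℝ => q.2 * exp (-(h q.1 * q.2))) (Ioo m₁ m₂ ×ˢ Ioi 0)
      (volume.prod volume) := by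
  have hS : MeasurableSet (Ioo m₁ m₂ ×ˢ Ioi (0 : ℝ)) := measurableSet_Ioo.prod measurableSet_Ioi
  obtain ⟨s₀, hs₀, hmin⟩ := isCompact_Icc.exists_isMinOn (nonempty_Icc.2 hm) hcont
  have hmeas : ContinuousOn (fun q : ℝ × ℝ => q.2 * exp (-(h q.1 * q.2))) (Ioo m₁ m₂ ×ˢ Ioi 0) :=
    continuousOn_snd.mul ((hcont.comp continuousOn_fst fun q hq => Ioo_subset_Icc_self hq.1).mul
      continuousOn_snd).neg.rexp
  have hbound := (integrable_const (μ := volume.restrict (Ioo m₁ m₂)) (1 : ℝ)).mul_prod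
    (integrableOn_mul_exp_neg_mul_Ioi (hpos s₀ hs₀))
  rw [Measure.prod_restrict] at hbound
  refine hbound.mono' (hmeas.aestronglyMeasurable hS) ?_
  filter_upwards [ae_restrict_mem hS] with q ⟨hs, hx⟩
  have hx : 0 < q.2 := hx
  have hh : h s₀ ≤ h q.1 := hmin (Ioo_subset_Icc_self hs)
  rw [norm_mul, norm_of_nonneg hx.le, norm_of_nonneg (exp_pos _).le, one_mul]
  gcongr

theorem setIntegral_cone_exp_neg {m₁ m₂ : ℝ} (hm : m₁ ≤ m₂) {h : ℝ → ℝ}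
    (hcont : ContinuousOn h (Icc m₁ m₂)) (hpos : ∀ s ∈ Icc m₁ m₂, 0 < h s) :
    ∫ p in cone m₁ m₂, exp (-(p.1 * h (p.2 / p.1))) = ∫ s in m₁..m₂, (h s ^ 2)⁻¹ := by
  calc ∫ p in cone m₁ m₂, exp (-(p.1 * h (p.2 / p.1)))
      = ∫ q in Ioo m₁ m₂ ×ˢ Ioi 0, q.2 * exp (-(h q.1 * q.2)) := by
        rw [setIntegral_cone]
        refine setIntegral_congr_fun (measurableSet_Ioo.prod measurableSet_Ioi)
          fun q ⟨_, hx⟩ => ?_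
        simp [ne_of_gt hx.out, mul_comm]
    _ = ∫ s in Ioo m₁ m₂, ∫ x in Ioi 0, x * exp (-(h s * x)) := by
        rw [Measure.volume_eq_prod,
          setIntegral_prod _ (integrableOn_Ioo_prod_Ioi_mul_exp_neg hm hcont hpos)]
    _ = ∫ s in Ioo m₁ m₂, (h s ^ 2)⁻¹ := setIntegral_congr_fun measurableSet_Ioo fun s hs =>
        integral_mul_exp_neg_mul_Ioi (hpos s (Ioo_subset_Icc_self hs))
    _ = ∫ s in m₁..m₂, (h s ^ 2)⁻¹ := by
        rw [intervalIntegral.integral_of_le hm, integral_Ioc_eq_integral_Ioo]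

theorem setIntegral_cone_exp_neg_eq_sub {m₁ m₂ : ℝ} (hm : m₁ ≤ m₂) {h F : ℝ → ℝ}
    (hcont : ContinuousOn h (Icc m₁ m₂)) (hpos : ∀ s ∈ Icc m₁ m₂, 0 < h s)
    (hF : ∀ s ∈ Icc m₁ m₂, HasDerivAt F (h s ^ 2)⁻¹ s) :
    ∫ p in cone m₁ m₂, exp (-(p.1 * h (p.2 / p.1))) = F m₂ - F m₁ := by
  rw [setIntegral_cone_exp_neg hm hcont hpos]
  refine intervalIntegral.integral_eq_sub_of_hasDerivAt (by rwa [uIcc_of_le hm]) ?_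
  exact ((hcont.pow 2).inv₀ fun s hs => pow_ne_zero 2 (hpos s hs).ne').intervalIntegrable_of_Icc hm

theorem D₁_eq_cone {a₁ a₂ : ℝ} (ha₁ : -1 < a₁) (ha : a₁ < a₂) (ha₂ : a₂ < 1) :
    {A : ℝ × ℝ | 0 < A.1 ∧ 0 < A.2 ∧ |A.1 - A.2| < A.1 * a₂ - A.2 * a₁}
      = cone ((1 - a₂) / (1 - a₁)) ((1 + a₂) / (1 + a₁)) := by
  have hsub : 0 < 1 - a₁ := by linarith
  have hadd : 0 < 1 + a₁ := by linarith
  ext ⟨x, y⟩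
  simp only [cone, mem_ofPred_eq, abs_sub_lt_iff, div_mul_eq_mul_div, div_lt_iff₀ hsub,
    lt_div_iff₀ hadd]
  constructor
  · rintro ⟨hx, -, h₁, h₂⟩
    exact ⟨hx, by linarith, by linarith⟩
  · rintro ⟨hx, h₁, h₂⟩
    exact ⟨hx, by nlinarith, by linarith, by linarith⟩

theorem integral_D₁ {a₁ a₂ : ℝ} (ha₁ : -1 < a₁) (ha : a₁ < a₂) (ha₂ : a₂ < 1) :
    ∫ A in {A : ℝ × ℝ | 0 < A.1 ∧ 0 < A.2 ∧ |A.1 - A.2| < A.1 * a₂ - A.2 * a₁},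
      exp (-((A.1 * a₂ - A.2 * a₁) / (a₂ - a₁))) = 2 * (a₂ - a₁) := by
  set m₁ := (1 - a₂) / (1 - a₁)
  set m₂ := (1 + a₂) / (1 + a₁)
  have hsub : 0 < 1 - a₁ := by linarith
  have hadd : 0 < 1 + a₁ := by linarith
  have hb : 0 < a₂ - a₁ := by linarith
  have hm : m₁ ≤ m₂ := by
    rw [div_le_div_iff₀ hsub hadd]; nlinarith
  have hpos : ∀ s ∈ Icc m₁ m₂, 0 < a₂ - s * a₁ := by
    rintro s ⟨hs₁, hs₂⟩
    rw [div_le_iff₀ hsub] at hs₁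
    rw [le_div_iff₀ hadd] at hs₂
    rcases le_total 0 a₁ with h | h <;> nlinarith
  have hF : ∀ s ∈ Icc m₁ m₂, HasDerivAt (fun s => (a₂ - a₁) * ((s - 1) / (a₂ - s * a₁)))
      (((a₂ - s * a₁) / (a₂ - a₁)) ^ 2)⁻¹ s := by
    intro s hs
    have hne := (hpos s hs).ne'
    refine ((((hasDerivAt_id' s).sub_const 1).div
      (((hasDerivAt_id' s).mul_const a₁).const_sub a₂) hne).const_mul (a₂ - a₁)).congr_deriv ?_
    field_simp
    ring
  rw [D₁_eq_cone ha₁ ha ha₂,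
    setIntegral_congr_fun (measurableSet_cone _ _)
      (g := fun p => exp (-(p.1 * ((a₂ - p.2 / p.1 * a₁) / (a₂ - a₁))))),
    setIntegral_cone_exp_neg_eq_sub hm (by fun_prop) (fun s hs => div_pos (hpos s hs) hb) hF]
  · have e₁ : a₂ - m₁ * a₁ = (a₂ - a₁) / (1 - a₁) := by simp only [m₁]; field_simp; ring
    have e₂ : a₂ - m₂ * a₁ = (a₂ - a₁) / (1 + a₁) := by simp only [m₂]; field_simp; ring
    simp only [e₁, e₂, m₁, m₂]
    field_simp
    ring
  · rintro ⟨x, y⟩ ⟨hx, -⟩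
    field_simp

theorem volume_setOf_snd_eq_mul_fst (m : ℝ) : volume {p : ℝ × ℝ | p.2 = m * p.1} = 0 := by
  rw [Measure.volume_eq_prod, Measure.measure_prod_null
    (measurableSet_eq_fun measurable_snd (measurable_fst.const_mul m))]
  refine Filter.Eventually.of_forall fun x => ?_
  simp [preimage]

theorem D₂_plus_ae_eq_cone {a₁ a₂ : ℝ} (ha : a₁ < a₂) (ha₂ : a₂ < 1) :
    {A : ℝ × ℝ | 0 < A.1 ∧ 0 < A.2 ∧ A.1 * a₂ - A.2 * a₁ ≤ |A.1 - A.2| ∧ A.2 < A.1}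
      =ᵐ[volume] cone 0 ((1 - a₂) / (1 - a₁)) := by
  have hsub : 0 < 1 - a₁ := by linarith
  rw [ae_eq_set]
  constructor
  · refine measure_mono_null (fun p ⟨⟨hx, hy, hle, hyx⟩, hp⟩ => ?_)
      (volume_setOf_snd_eq_mul_fst ((1 - a₂) / (1 - a₁)))
    simp only [cone, mem_ofPred_eq, not_and, not_lt, zero_mul, div_mul_eq_mul_div] at hp ⊢
    have hp := hp hx hy
    rw [div_le_iff₀ hsub] at hp
    rw [abs_of_pos (sub_pos.2 hyx)] at hle
    field_simp
    linarith
  · rw [sdiff_eq_empty.2, measure_empty]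
    rintro ⟨x, y⟩ ⟨hx, hy, hyx⟩
    simp only [zero_mul, div_mul_eq_mul_div, lt_div_iff₀ hsub] at hy hyx
    have hyx' : y < x := by nlinarith
    refine ⟨hx, hy, ?_, hyx'⟩
    rw [abs_of_pos (sub_pos.2 hyx')]
    linarith

theorem integral_D₂_plus {a₁ a₂ : ℝ} (ha₁ : -1 < a₁) (ha : a₁ < a₂) (ha₂ : a₂ < 1) :
    ∫ A in {A : ℝ × ℝ | 0 < A.1 ∧ 0 < A.2 ∧ A.1 * a₂ - A.2 * a₁ ≤ |A.1 - A.2| ∧ A.2 < A.1},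
      exp (-((A.1 * (a₂ + 1) - A.2 * (a₁ + 1)) ^ 2 / (4 * (a₂ - a₁) * (A.1 - A.2))))
      = (a₂ - a₁) * (16 / (3 * (a₂ + 1) ^ 3) - 2 / 3) := by
  set m := (1 - a₂) / (1 - a₁)
  have hsub : 0 < 1 - a₁ := by linarith
  have hb : 0 < a₂ - a₁ := by linarith
  have hm : m < 1 := by rw [div_lt_one hsub]; linarith
  have hm₀ : 0 ≤ m := div_nonneg (by linarith) hsub.le
  have hpos : ∀ s ∈ Icc 0 m, 0 < 1 - s ∧ 0 < a₂ + 1 - s * (a₁ + 1) := by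
    rintro s ⟨-, hs⟩
    constructor <;> nlinarith
  have hF : ∀ s ∈ Icc 0 m, HasDerivAt
      (fun s => -(16 * (a₂ - a₁) / 3) * ((1 - s) / (a₂ + 1 - s * (a₁ + 1))) ^ 3)
      (((a₂ + 1 - s * (a₁ + 1)) ^ 2 / (4 * (a₂ - a₁) * (1 - s))) ^ 2)⁻¹ s := by
    intro s hs
    have hne := (hpos s hs).2.ne'
    have ht : HasDerivAt (fun s => (1 - s) / (a₂ + 1 - s * (a₁ + 1)))
        (-(a₂ - a₁) / (a₂ + 1 - s * (a₁ + 1)) ^ 2) s := by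
      refine (((hasDerivAt_id' s).const_sub 1).div
        (((hasDerivAt_id' s).mul_const (a₁ + 1)).const_sub (a₂ + 1)) hne).congr_deriv ?_
      field_simp
      ring
    refine ((ht.pow 3).const_mul _).congr_deriv ?_
    have := (hpos s hs).1.ne'
    have := hb.ne'
    norm_num
    field_simp
    ring
  rw [setIntegral_congr_set (D₂_plus_ae_eq_cone ha ha₂),
    setIntegral_congr_fun (measurableSet_cone _ _) (g := fun p => exp (-(p.1 *
      ((a₂ + 1 - p.2 / p.1 * (a₁ + 1)) ^ 2 / (4 * (a₂ - a₁) * (1 - p.2 / p.1)))))),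
    setIntegral_cone_exp_neg_eq_sub hm₀ ?cont (fun s hs => div_pos (pow_pos (hpos s hs).2 2)
      (mul_pos (mul_pos four_pos hb) (hpos s hs).1)) hF]
  · have e : (1 - m) / (a₂ + 1 - m * (a₁ + 1)) = 1 / 2 := by
      rw [div_eq_iff (hpos m ⟨hm₀, le_rfl⟩).2.ne']
      simp only [m]
      field_simp
      ring
    simp only [e]
    field_simp
    ring
  · exact ContinuousOn.div (by fun_prop) (by fun_prop) fun s hs =>
      (mul_pos (mul_pos four_pos hb) (hpos s hs).1).ne'
  · rintro ⟨x, y⟩ ⟨hx, -, hy⟩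
    have : x - y ≠ 0 := by nlinarith
    field_simp

theorem setIntegral_preimage_swap {α β E : Type*} [MeasurableSpace α] [MeasurableSpace β]
    [NormedAddCommGroup E] [NormedSpace ℝ E] {μ : Measure α} {ν : Measure β} [SFinite μ]
    [SFinite ν] (f : α × β → E) (s : Set (α × β)) :
    ∫ p in Prod.swap ⁻¹' s, f p.swap ∂ν.prod μ = ∫ p in s, f p ∂μ.prod ν :=
  Measure.measurePreserving_swap.setIntegral_preimage_emb
    MeasurableEquiv.prodComm.measurableEmbedding f s

theorem integral_D₂_minus {a₁ a₂ : ℝ} (ha₁ : -1 < a₁) (ha : a₁ < a₂) (ha₂ : a₂ < 1) :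
    ∫ A in {A : ℝ × ℝ | 0 < A.1 ∧ 0 < A.2 ∧ A.1 * a₂ - A.2 * a₁ ≤ |A.1 - A.2| ∧ A.1 < A.2},
      exp (-((A.2 * (1 - a₁) - A.1 * (1 - a₂)) ^ 2 / (4 * (a₂ - a₁) * (A.2 - A.1))))
      = (a₂ - a₁) * (16 / (3 * (1 - a₁) ^ 3) - 2 / 3) := by
  have h := (setIntegral_preimage_swap _ _).trans
    (integral_D₂_plus (a₁ := -a₂) (a₂ := -a₁) (by linarith) (by linarith) (by linarith))
  refine (Eq.trans ?_ h).trans (by ring)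
  congr 1
  · congr 1
    ext ⟨x, y⟩
    simp only [mem_ofPred_eq, mem_preimage, Prod.swap_prod_mk, abs_sub_comm y x]
    constructor <;> rintro ⟨h₁, h₂, h₃, h₄⟩ <;> exact ⟨h₂, h₁, by linarith, h₄⟩
  · ext A
    simp only [Prod.fst_swap, Prod.snd_swap]
    ring_nf

theorem support_interval_density (a₁ a₂ : ℝ)
    (h₁ : a₁ ∈ Set.Ioo (-1 : ℝ) 0) (h₂ : a₂ ∈ Set.Ioo (0 : ℝ) 1) :
    (1 / 4) *
      ((∫ A in {A : ℝ × ℝ | 0 < A.1 ∧ 0 < A.2 ∧ |A.1 - A.2| < A.1 * a₂ - A.2 * a₁},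
          Real.exp (-((A.1 * a₂ - A.2 * a₁) / (a₂ - a₁))))
        + (∫ A in {A : ℝ × ℝ | 0 < A.1 ∧ 0 < A.2 ∧ A.1 * a₂ - A.2 * a₁ ≤ |A.1 - A.2| ∧ A.2 < A.1},
            Real.exp (-((A.1 * (a₂ + 1) - A.2 * (a₁ + 1)) ^ 2 /
              (4 * (a₂ - a₁) * (A.1 - A.2)))))
        + (∫ A in {A : ℝ × ℝ | 0 < A.1 ∧ 0 < A.2 ∧ A.1 * a₂ - A.2 * a₁ ≤ |A.1 - A.2| ∧ A.1 < A.2},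
            Real.exp (-((A.2 * (1 - a₁) - A.1 * (1 - a₂)) ^ 2 /
              (4 * (a₂ - a₁) * (A.2 - A.1))))))
      = (a₂ - a₁) * (4 / (3 * (1 + a₂) ^ 3) + 4 / (3 * (1 - a₁) ^ 3) + 1 / 6) := by
  obtain ⟨ha₁, ha₁₀⟩ := h₁
  obtain ⟨ha₂₀, ha₂⟩ := h₂
  have ha : a₁ < a₂ := ha₁₀.trans ha₂₀
  rw [integral_D₁ ha₁ ha ha₂, integral_D₂_plus ha₁ ha ha₂, integral_D₂_minus ha₁ ha ha₂,
    add_comm a₂ 1]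
  have : 1 + a₂ ≠ 0 := by linarith
  have : 1 - a₁ ≠ 0 := by linarith
  field_simp
  ring
end

section
/- Let $a_1 \in (-1,0)$ and $a_2 \in (0,1)$, and let $D_1 = \{(A_1,A_2) \in \mathbb{R}^2 : A_1 > 0,\ A_2 > 0,\ |A_1 - A_2| < A_1 a_2 - A_2 a_1\}$. Then $\int_{D_1} e^{-\frac{A_1 a_2 - A_2 a_1}{a_2 - a_1}}\,dA_1\,dA_2 = 2(a_2 - a_1)$. -/
/-!
The linear map `(u, v) ↦ ((1 + a₁) u + (1 - a₁) v, (1 + a₂) u + (1 - a₂) v)` carries the open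
positive quadrant onto the domain. In terms of its image `A`, `u + v = (A₁ a₂ - A₂ a₁) / (a₂ - a₁)`
and `u - v = (A₂ - A₁) / (a₂ - a₁)`, so it inverts the paper's substitution `r = a₂ A₁ - a₁ A₂`,
`q = A₂ - A₁` followed by `u, v ∝ r ± q`. Its determinant is `2 (a₁ - a₂)`, and the integrand
becomes `exp (-(u + v))`, whose integral over the quadrant is `1`.
-/

open Real MeasureTheory Set

theorem setIntegral_image_continuousLinearMap {E F : Type*} [NormedAddCommGroup E]
    [NormedSpace ℝ E] [FiniteDimensional ℝ E] [MeasurableSpace E] [BorelSpace E]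
    [NormedAddCommGroup F] [NormedSpace ℝ F] (μ : Measure E) [μ.IsAddHaarMeasure]
    {T : E →L[ℝ] E} (hT : T.det ≠ 0) {s : Set E} (hs : MeasurableSet s) (g : E → F) :
    ∫ x in T '' s, g x ∂μ = |T.det| • ∫ x in s, g (T x) ∂μ := by
  rw [integral_image_eq_integral_abs_det_fderiv_smul μ hs
    (fun x _ => T.hasFDerivAt.hasFDerivWithinAt)
    (T.toContinuousLinearEquivOfDetNeZero hT).injective.injOn, integral_smul]

theorem integral_Ioi_prod_Ioi_exp_neg_add :
    ∫ x in Ioi (0 : ℝ) ×ˢ Ioi (0 : ℝ), exp (-(x.1 + x.2)) = 1 := by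
  simp_rw [neg_add, exp_add]
  rw [Measure.volume_eq_prod, setIntegral_prod_mul (fun t => exp (-t)) (fun t => exp (-t)),
    integral_exp_neg_Ioi_zero, one_mul]

noncomputable def quadrantMap (a₁ a₂ : ℝ) : ℝ × ℝ →L[ℝ] ℝ × ℝ :=
  (Matrix.toLin (.finTwoProd ℝ) (.finTwoProd ℝ)
    !![1 + a₁, 1 - a₁; 1 + a₂, 1 - a₂]).toContinuousLinearMap

section quadrantMap

variable {a₁ a₂ : ℝ}

theorem quadrantMap_apply (x : ℝ × ℝ) :
    quadrantMap a₁ a₂ x = ((1 + a₁) * x.1 + (1 - a₁) * x.2, (1 + a₂) * x.1 + (1 - a₂) * x.2) :=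
  Matrix.toLin_finTwoProd_apply _ _ _ _ x

theorem det_quadrantMap : (quadrantMap a₁ a₂).det = 2 * (a₁ - a₂) := by
  simp only [quadrantMap, LinearMap.det_toContinuousLinearMap, LinearMap.det_toLin,
    Matrix.det_fin_two_of]
  ring

theorem quadrantMap_fst_sub_snd (x : ℝ × ℝ) :
    (quadrantMap a₁ a₂ x).1 - (quadrantMap a₁ a₂ x).2 = (a₁ - a₂) * (x.1 - x.2) := by
  simp only [quadrantMap_apply]
  ring

theorem quadrantMap_fst_mul_sub_snd_mul (x : ℝ × ℝ) :
    (quadrantMap a₁ a₂ x).1 * a₂ - (quadrantMap a₁ a₂ x).2 * a₁ = (a₂ - a₁) * (x.1 + x.2) := by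
  simp only [quadrantMap_apply]
  ring

theorem image_quadrantMap_Ioi_prod_Ioi (h₁ : a₁ ∈ Ioo (-1) 1) (h₂ : a₂ ∈ Ioo (-1) 1)
    (h : a₁ < a₂) :
    quadrantMap a₁ a₂ '' (Ioi 0 ×ˢ Ioi 0) =
      {A : ℝ × ℝ | 0 < A.1 ∧ 0 < A.2 ∧ |A.1 - A.2| < A.1 * a₂ - A.2 * a₁} := by
  obtain ⟨ha₁, ha₁'⟩ := h₁
  obtain ⟨ha₂, ha₂'⟩ := h₂
  ext A
  constructor
  · rintro ⟨x, ⟨hx₁ : 0 < x.1, hx₂ : 0 < x.2⟩, rfl⟩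
    refine ⟨?_, ?_, ?_⟩
    · simp only [quadrantMap_apply]; nlinarith
    · simp only [quadrantMap_apply]; nlinarith
    · rw [quadrantMap_fst_sub_snd, quadrantMap_fst_mul_sub_snd_mul, abs_mul,
        abs_of_neg (sub_neg.2 h), neg_sub]
      exact mul_lt_mul_of_pos_left (abs_sub_lt_iff.2 ⟨by linarith, by linarith⟩) (sub_pos.2 h)
  · rintro ⟨-, -, hA⟩
    obtain ⟨hl, hr⟩ := abs_lt.1 hA
    have hc : 0 < 2 * (a₂ - a₁) := by linarith
    have hc' : a₂ - a₁ ≠ 0 := by linarith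
    refine ⟨((A.1 * a₂ - A.2 * a₁ + (A.2 - A.1)) / (2 * (a₂ - a₁)),
      (A.1 * a₂ - A.2 * a₁ - (A.2 - A.1)) / (2 * (a₂ - a₁))),
      ⟨div_pos (by linarith) hc, div_pos (by linarith) hc⟩, ?_⟩
    rw [quadrantMap_apply]
    ext <;> field_simp <;> ring

end quadrantMap

theorem integral_Q1 (a₁ a₂ : ℝ)
    (h₁ : a₁ ∈ Set.Ioo (-1 : ℝ) 0) (h₂ : a₂ ∈ Set.Ioo (0 : ℝ) 1) :
    (∫ A in {A : ℝ × ℝ | 0 < A.1 ∧ 0 < A.2 ∧ |A.1 - A.2| < A.1 * a₂ - A.2 * a₁},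
        Real.exp (-((A.1 * a₂ - A.2 * a₁) / (a₂ - a₁))))
      = 2 * (a₂ - a₁) := by
  obtain ⟨ha₁, ha₁'⟩ := h₁
  obtain ⟨ha₂, ha₂'⟩ := h₂
  have hc : 0 < a₂ - a₁ := by linarith
  have hdet : (quadrantMap a₁ a₂).det = -(2 * (a₂ - a₁)) := by
    rw [det_quadrantMap]
    ring
  have hexp (x : ℝ × ℝ) : exp (-(((quadrantMap a₁ a₂ x).1 * a₂ - (quadrantMap a₁ a₂ x).2 * a₁)
      / (a₂ - a₁))) = exp (-(x.1 + x.2)) := by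
    rw [quadrantMap_fst_mul_sub_snd_mul, mul_div_cancel_left₀ _ hc.ne']
  rw [← image_quadrantMap_Ioi_prod_Ioi ⟨by linarith, by linarith⟩ ⟨by linarith, ha₂'⟩
      (by linarith),
    setIntegral_image_continuousLinearMap volume (by rw [hdet]; linarith)
      (measurableSet_Ioi.prod measurableSet_Ioi)]
  simp only [hexp, integral_Ioi_prod_Ioi_exp_neg_add, hdet, abs_neg, smul_eq_mul, mul_one]
  exact abs_of_pos (by linarith)
end

section
/- Let $a_1 \in (-1,0)$ and $a_2 \in (0,1)$, and let $D_2^+ = \{(A_1,A_2) \in \mathbb{R}^2 : A_1 > 0,\ A_2 > 0,\ |A_1 - A_2| \ge A_1 a_2 - A_2 a_1,\ A_1 > A_2\}$. Then $\int_{D_2^+} e^{-\frac{(A_1(a_2+1) - A_2(a_1+1))^2}{4(a_2-a_1)(A_1-A_2)}}\,dA_1\,dA_2 = \frac{16(a_2-a_1)}{3}\Big(\frac{1}{(1+a_2)^3} - \frac{1}{8}\Big)$. -/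
/-!
In the coordinates `s = A₁ - A₂`, `x = (A₁ (a₂ + 1) - A₂ (a₁ + 1)) / s` (so `x = 1 + v` in the
paper's notation) the region `D₂⁺` becomes the strip `(1 + a₂, 2] × (0, ∞)`, the Jacobian is
`s / (a₂ - a₁)` and the exponent becomes `-x² s / (4 (a₂ - a₁))`. Integrating
`s e^{-κ x² s}` over `s > 0` gives `1 / (κ² x⁴)`, and integrating `x⁻⁴` over `(1 + a₂, 2]`
gives the claimed value.
-/

open Real MeasureTheory Set

/-- The inverse of `A ↦ ((A.1 * β - A.2 * α) / (A.1 - A.2), A.1 - A.2)`. -/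
noncomputable def diffRatioParam (α β : ℝ) (p : ℝ × ℝ) : ℝ × ℝ :=
  (p.2 * (p.1 - α) / (β - α), p.2 * (p.1 - β) / (β - α))

theorem hasFDerivAt_diffRatioParam (α β : ℝ) (p : ℝ × ℝ) :
    HasFDerivAt (diffRatioParam α β)
      (LinearMap.toContinuousLinearMap
        (Matrix.toLin (Module.Basis.finTwoProd ℝ) (Module.Basis.finTwoProd ℝ)
          !![p.2 / (β - α), (p.1 - α) / (β - α); p.2 / (β - α), (p.1 - β) / (β - α)])) p := by
  have hcoord (γ : ℝ) : HasFDerivAt (fun q : ℝ × ℝ ↦ q.2 * (q.1 - γ) / (β - α))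
      ((p.2 / (β - α)) • ContinuousLinearMap.fst ℝ ℝ ℝ
        + ((p.1 - γ) / (β - α)) • ContinuousLinearMap.snd ℝ ℝ ℝ) p := by
    refine (((hasFDerivAt_snd (𝕜 := ℝ) (p := p)).mul
      ((hasFDerivAt_fst (𝕜 := ℝ) (p := p)).sub_const γ)).mul_const (β - α)⁻¹).congr_fderiv ?_
    ext <;> simp <;> ring
  rw [Matrix.toLin_finTwoProd_toContinuousLinearMap]
  exact (hcoord α).prodMk (hcoord β)

section
variable {α β : ℝ}

theorem diffRatioParam_fst_sub_snd (h : α ≠ β) (p : ℝ × ℝ) :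
    (diffRatioParam α β p).1 - (diffRatioParam α β p).2 = p.2 := by
  have : β - α ≠ 0 := sub_ne_zero.2 h.symm
  simp only [diffRatioParam]
  field_simp
  ring

theorem diffRatioParam_fst_mul_sub_snd_mul (h : α ≠ β) (p : ℝ × ℝ) :
    (diffRatioParam α β p).1 * β - (diffRatioParam α β p).2 * α = p.2 * p.1 := by
  have : β - α ≠ 0 := sub_ne_zero.2 h.symm
  simp only [diffRatioParam]
  field_simp
  ring

theorem injOn_diffRatioParam (h : α ≠ β) : InjOn (diffRatioParam α β) {p | p.2 ≠ 0} := by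
  intro p _ q hq hpq
  have hs : p.2 = q.2 := by
    rw [← diffRatioParam_fst_sub_snd h p, ← diffRatioParam_fst_sub_snd h q, hpq]
  have hx : p.2 * p.1 = q.2 * q.1 := by
    rw [← diffRatioParam_fst_mul_sub_snd_mul h p, ← diffRatioParam_fst_mul_sub_snd_mul h q, hpq]
  rw [hs] at hx
  exact Prod.ext (mul_left_cancel₀ hq hx) hs

theorem integral_image_diffRatioParam (h : α ≠ β) {S : Set (ℝ × ℝ)}
    (hS : MeasurableSet S) (hS₀ : ∀ p ∈ S, p.2 ≠ 0) (g : ℝ × ℝ → ℝ) :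
    ∫ A in diffRatioParam α β '' S, g A = ∫ p in S, |p.2 / (β - α)| * g (diffRatioParam α β p) := by
  rw [integral_image_eq_integral_abs_det_fderiv_smul volume hS
    (fun p _ ↦ (hasFDerivAt_diffRatioParam α β p).hasFDerivWithinAt)
    ((injOn_diffRatioParam h).mono hS₀)]
  refine setIntegral_congr_fun hS fun p _ ↦ ?_
  have : β - α ≠ 0 := sub_ne_zero.2 h.symm
  have hdet : Matrix.det !![p.2 / (β - α), (p.1 - α) / (β - α); p.2 / (β - α), (p.1 - β) / (β - α)]
      = -(p.2 / (β - α)) := by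
    rw [Matrix.det_fin_two_of]
    field_simp
    ring
  rw [LinearMap.det_toContinuousLinearMap, LinearMap.det_toLin, hdet, abs_neg, smul_eq_mul]

end

def regionD2Plus (a₁ a₂ : ℝ) : Set (ℝ × ℝ) :=
  {A | 0 < A.1 ∧ 0 < A.2 ∧ A.1 * a₂ - A.2 * a₁ ≤ |A.1 - A.2| ∧ A.2 < A.1}

theorem image_diffRatioParam_Ioc_prod_Ioi {a₁ a₂ : ℝ} (h : a₁ < a₂) :
    diffRatioParam (a₁ + 1) (a₂ + 1) '' (Ioc (a₂ + 1) 2 ×ˢ Ioi 0) = regionD2Plus a₁ a₂ := by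
  have hne : a₁ + 1 ≠ a₂ + 1 := by linarith
  ext A
  constructor
  · rintro ⟨p, ⟨⟨hx₁, hx₂⟩, hs : 0 < p.2⟩, rfl⟩
    have hdiff := diffRatioParam_fst_sub_snd hne p
    have hcomb := diffRatioParam_fst_mul_sub_snd_mul hne p
    have h₂ : 0 < (diffRatioParam (a₁ + 1) (a₂ + 1) p).2 :=
      div_pos (mul_pos hs (by linarith)) (by linarith)
    refine ⟨by linarith, h₂, ?_, by linarith⟩
    rw [hdiff, abs_of_pos hs]
    nlinarith
  · rintro ⟨-, h₂, hle, hlt⟩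
    have hs : 0 < A.1 - A.2 := by linarith
    rw [abs_of_pos hs] at hle
    refine ⟨((A.1 * (a₂ + 1) - A.2 * (a₁ + 1)) / (A.1 - A.2), A.1 - A.2), ⟨⟨?_, ?_⟩, hs⟩, ?_⟩
    · rw [lt_div_iff₀ hs]; nlinarith
    · rw [div_le_iff₀ hs]; linarith
    · have : a₂ + 1 - (a₁ + 1) ≠ 0 := by linarith
      simp only [diffRatioParam]
      ext <;> field_simp <;> ring

theorem integral_mul_exp_neg_mul_Ioi_s2 {r : ℝ} (hr : 0 < r) :
    ∫ t in Ioi (0 : ℝ), t * exp (-(r * t)) = 1 / r ^ 2 := by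
  have h := integral_rpow_mul_exp_neg_mul_Ioi two_pos hr
  norm_num [Gamma_two] at h
  simpa using h

theorem integrableOn_mul_exp_neg_mul_Ioi_s2 {r : ℝ} (hr : 0 < r) :
    IntegrableOn (fun t ↦ t * exp (-(r * t))) (Ioi 0) := by
  simpa using integrableOn_rpow_mul_exp_neg_mul_rpow (s := 1) (p := 1) (by norm_num) one_pos hr

theorem integrableOn_Ioc_prod_Ioi_mul_exp_neg {a b κ : ℝ} (ha : 0 < a) (hκ : 0 < κ) :
    IntegrableOn (fun p : ℝ × ℝ ↦ p.2 * exp (-(κ * p.1 ^ 2 * p.2))) (Ioc a b ×ˢ Ioi 0) := by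
  have hdom : IntegrableOn (fun p : ℝ × ℝ ↦ p.2 * exp (-(κ * a ^ 2 * p.2)))
      (Ioc a b ×ˢ Ioi 0) := by
    rw [IntegrableOn, Measure.volume_eq_prod, ← Measure.prod_restrict]
    exact (integrableOn_mul_exp_neg_mul_Ioi_s2 (by positivity)).comp_snd _
  refine hdom.mono' (by fun_prop : Continuous _).aestronglyMeasurable ?_
  rw [ae_restrict_iff' (measurableSet_Ioc.prod measurableSet_Ioi)]
  refine .of_forall fun p ⟨⟨hx, _⟩, hs⟩ ↦ ?_
  have hs : 0 < p.2 := hs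
  rw [norm_of_nonneg (by positivity)]
  gcongr

theorem integral_Ioc_prod_Ioi_mul_exp_neg {a b κ : ℝ} (ha : 0 < a) (hab : a ≤ b) (hκ : 0 < κ) :
    ∫ p in Ioc a b ×ˢ Ioi 0, p.2 * exp (-(κ * p.1 ^ 2 * p.2))
      = (1 / a ^ 3 - 1 / b ^ 3) / (3 * κ ^ 2) := by
  have h0 : (0 : ℝ) ∉ uIcc a b := by
    rw [uIcc_of_le hab]
    exact fun h ↦ ha.not_ge h.1
  rw [Measure.volume_eq_prod, setIntegral_prod _
    (by rw [← Measure.volume_eq_prod]; exact integrableOn_Ioc_prod_Ioi_mul_exp_neg ha hκ)]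
  calc ∫ x in Ioc a b, ∫ s in Ioi 0, s * exp (-(κ * x ^ 2 * s))
      = ∫ x in a..b, (κ ^ 2)⁻¹ * x ^ (-4 : ℤ) := by
        rw [intervalIntegral.integral_of_le hab]
        refine setIntegral_congr_fun measurableSet_Ioc fun x hx ↦ ?_
        have hx : 0 < x := ha.trans hx.1
        rw [integral_mul_exp_neg_mul_Ioi_s2 (by positivity)]
        field_simp
    _ = (1 / a ^ 3 - 1 / b ^ 3) / (3 * κ ^ 2) := by
        rw [intervalIntegral.integral_const_mul, integral_zpow (Or.inr ⟨by norm_num, h0⟩)]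
        norm_num [zpow_neg]
        field_simp
        ring

theorem integral_Q2_plus (a₁ a₂ : ℝ)
    (h₁ : a₁ ∈ Set.Ioo (-1 : ℝ) 0) (h₂ : a₂ ∈ Set.Ioo (0 : ℝ) 1) :
    (∫ A in {A : ℝ × ℝ | 0 < A.1 ∧ 0 < A.2 ∧ A.1 * a₂ - A.2 * a₁ ≤ |A.1 - A.2| ∧ A.2 < A.1},
        Real.exp (-((A.1 * (a₂ + 1) - A.2 * (a₁ + 1)) ^ 2 / (4 * (a₂ - a₁) * (A.1 - A.2)))))
      = (16 * (a₂ - a₁) / 3) * (1 / (1 + a₂) ^ 3 - 1 / 8) := by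
  obtain ⟨-, ha₁⟩ := h₁
  obtain ⟨ha₂, ha₂'⟩ := h₂
  have hc : 0 < a₂ - a₁ := by linarith
  have hne : a₁ + 1 ≠ a₂ + 1 := by linarith
  change ∫ A in regionD2Plus a₁ a₂, _ = _
  rw [← image_diffRatioParam_Ioc_prod_Ioi (by linarith),
    integral_image_diffRatioParam hne (measurableSet_Ioc.prod measurableSet_Ioi)
      fun p hp ↦ hp.2.ne']
  calc _ = ∫ p in Ioc (a₂ + 1) 2 ×ˢ Ioi 0,
        (a₂ - a₁)⁻¹ * (p.2 * exp (-((4 * (a₂ - a₁))⁻¹ * p.1 ^ 2 * p.2))) := by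
        refine setIntegral_congr_fun (measurableSet_Ioc.prod measurableSet_Ioi)
          fun p ⟨_, hs⟩ ↦ ?_
        have hs : 0 < p.2 := hs
        rw [diffRatioParam_fst_mul_sub_snd_mul hne, diffRatioParam_fst_sub_snd hne,
          show a₂ + 1 - (a₁ + 1) = a₂ - a₁ by ring, abs_of_pos (div_pos hs hc)]
        field_simp
    _ = _ := by
        rw [integral_const_mul, integral_Ioc_prod_Ioi_mul_exp_neg (by linarith) (by linarith)
          (by positivity)]
        field_simp
        ring
end

section
/- Let $a_1 \in (-1,0)$ and $a_2 \in (0,1)$, and let $D_2^- = \{(A_1,A_2) \in \mathbb{R}^2 : A_1 > 0,\ A_2 > 0,\ |A_1 - A_2| \ge A_1 a_2 - A_2 a_1,\ A_2 > A_1\}$. Then $\int_{D_2^-} e^{-\frac{(A_2(1-a_1) - A_1(1-a_2))^2}{4(a_2-a_1)(A_2-A_1)}}\,dA_1\,dA_2 = \frac{16(a_2-a_1)}{3}\Big(\frac{1}{(1-a_1)^3} - \frac{1}{8}\Big)$. -/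
open Real MeasureTheory Set

/-!
With `u = A₂(1 - a₁) - A₁(1 - a₂)` and `v = (A₂ - A₁) / u`, the exponent becomes
`-u / (4(a₂ - a₁)v)`, the Jacobian of `(v, u) ↦ A` is `u / (a₂ - a₁)`, and the domain becomes,
up to the null line `v = 1/2`, the half-strip `1/2 < v < 1/(1 - a₁)`, `u > 0`. The inner integral
`∫₀^∞ u e^{-u/(4(a₂-a₁)v)} du = 16(a₂ - a₁)²v²` is a Gamma integral, and integrating `v²` over
`(1/2, 1/(1 - a₁))` gives the result.
-/

noncomputable def coneChart (p q : ℝ) (x : ℝ × ℝ) : ℝ × ℝ :=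
  (x.2 * (1 - p * x.1) / (p - q), x.2 * (1 - q * x.1) / (p - q))

noncomputable def fderivConeChart (p q : ℝ) (x : ℝ × ℝ) : ℝ × ℝ →L[ℝ] ℝ × ℝ :=
  (Matrix.toLin (.finTwoProd ℝ) (.finTwoProd ℝ)
    !![-(p * x.2) / (p - q), (1 - p * x.1) / (p - q);
       -(q * x.2) / (p - q), (1 - q * x.1) / (p - q)]).toContinuousLinearMap

section coneChart

variable {p q : ℝ}

theorem coneChart_snd_mul_sub (hpq : p ≠ q) (x : ℝ × ℝ) :
    (coneChart p q x).2 * p - (coneChart p q x).1 * q = x.2 := by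
  simp only [coneChart]
  field_simp [sub_ne_zero.2 hpq]
  ring

theorem coneChart_snd_sub_fst (hpq : p ≠ q) (x : ℝ × ℝ) :
    (coneChart p q x).2 - (coneChart p q x).1 = x.1 * x.2 := by
  simp only [coneChart]
  field_simp [sub_ne_zero.2 hpq]
  ring

theorem injOn_coneChart (hpq : p ≠ q) : InjOn (coneChart p q) {x | x.2 ≠ 0} := by
  intro x hx y _ h
  have h₂ : x.2 = y.2 := by
    rw [← coneChart_snd_mul_sub hpq x, h, coneChart_snd_mul_sub hpq]
  have h₁₂ : x.1 * x.2 = y.1 * y.2 := by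
    rw [← coneChart_snd_sub_fst hpq x, h, coneChart_snd_sub_fst hpq]
  refine Prod.ext (mul_right_cancel₀ hx ?_) h₂
  rw [h₁₂, h₂]

theorem image_coneChart (hpq : p ≠ q) {T : Set (ℝ × ℝ)} (hT : T ⊆ {x | x.2 ≠ 0}) :
    coneChart p q '' T = {A | A.2 * p - A.1 * q ≠ 0 ∧
      ((A.2 - A.1) / (A.2 * p - A.1 * q), A.2 * p - A.1 * q) ∈ T} := by
  ext A
  constructor
  · rintro ⟨x, hx, rfl⟩
    rw [mem_ofPred_eq, coneChart_snd_mul_sub hpq, coneChart_snd_sub_fst hpq,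
      mul_div_cancel_right₀ _ (hT hx)]
    exact ⟨hT hx, hx⟩
  · rintro ⟨hA, hAT⟩
    refine ⟨_, hAT, ?_⟩
    ext <;> simp only [coneChart] <;> field_simp [sub_ne_zero.2 hpq] <;> ring

theorem hasFDerivAt_coneChart (x : ℝ × ℝ) :
    HasFDerivAt (coneChart p q) (fderivConeChart p q x) x := by
  unfold fderivConeChart
  rw [Matrix.toLin_finTwoProd_toContinuousLinearMap]
  have hfst : HasFDerivAt (fun x : ℝ × ℝ => x.1) (ContinuousLinearMap.fst ℝ ℝ ℝ) x :=
    hasFDerivAt_fst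
  have hsnd : HasFDerivAt (fun x : ℝ × ℝ => x.2) (ContinuousLinearMap.snd ℝ ℝ ℝ) x :=
    hasFDerivAt_snd
  refine (HasFDerivAt.prodMk (𝕜 := ℝ)
    ((hsnd.mul ((hfst.const_mul p).const_sub 1)).mul_const (p - q)⁻¹)
    ((hsnd.mul ((hfst.const_mul q).const_sub 1)).mul_const (p - q)⁻¹)).congr_fderiv ?_
  ext <;> simp <;> ring

theorem det_fderivConeChart (hpq : p ≠ q) (x : ℝ × ℝ) :
    (fderivConeChart p q x).det = -(x.2 / (p - q)) := by
  simp only [fderivConeChart, LinearMap.det_toContinuousLinearMap, LinearMap.det_toLin,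
    Matrix.det_fin_two_of]
  field_simp [sub_ne_zero.2 hpq]
  ring

theorem setIntegral_image_coneChart {E : Type*} [NormedAddCommGroup E] [NormedSpace ℝ E]
    (hpq : p ≠ q) {T : Set (ℝ × ℝ)} (hTm : MeasurableSet T) (hT : T ⊆ {x | x.2 ≠ 0})
    (f : ℝ × ℝ → E) :
    ∫ A in coneChart p q '' T, f A = ∫ x in T, |x.2 / (p - q)| • f (coneChart p q x) := by
  rw [integral_image_eq_integral_abs_det_fderiv_smul volume hTm
    (fun x _ => (hasFDerivAt_coneChart x).hasFDerivWithinAt) ((injOn_coneChart hpq).mono hT)]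
  simp only [det_fderivConeChart hpq, abs_neg]

end coneChart

theorem volume_setOf_snd_eq_zero {f : ℝ → ℝ} (hf : Measurable f) :
    volume {A : ℝ × ℝ | A.2 = f A.1} = 0 := by
  rw [Measure.volume_eq_prod, Measure.measure_prod_null
    (measurableSet_eq_fun (g := fun A : ℝ × ℝ => f A.1) measurable_snd (by fun_prop))]
  filter_upwards with x
  simp [preimage]

theorem integrableOn_mul_exp_neg_div_Ioi {k : ℝ} (hk : 0 < k) :
    IntegrableOn (fun u => u * exp (-(u / k))) (Ioi 0) := by
  refine (integrableOn_rpow_mul_exp_neg_mul_rpow (s := 1) (p := 1) (by norm_num) one_pos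
    (inv_pos.2 hk)).congr_fun (fun u _ => ?_) measurableSet_Ioi
  simp only [rpow_one, div_eq_inv_mul, neg_mul]

theorem integral_mul_exp_neg_div_Ioi {k : ℝ} (hk : 0 < k) :
    ∫ u in Ioi 0, u * exp (-(u / k)) = k ^ 2 := by
  have h := integral_rpow_mul_exp_neg_mul_Ioi two_pos (inv_pos.2 hk)
  norm_num [Gamma_two] at h
  simpa only [div_eq_inv_mul] using h

theorem integral_Ioo_prod_Ioi_mul_exp_neg_div {k s t : ℝ} (hk : 0 < k) (hs : 0 < s)
    (hst : s ≤ t) :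
    ∫ x in Ioo s t ×ˢ Ioi 0, x.2 * exp (-(x.2 / (k * x.1))) = k ^ 2 * (t ^ 3 - s ^ 3) / 3 := by
  have hint : IntegrableOn (fun x : ℝ × ℝ => x.2 * exp (-(x.2 / (k * x.1))))
      (Ioo s t ×ˢ Ioi 0) (volume.prod volume) := by
    have hdom := (integrableOn_const (μ := volume) (s := Ioo s t) (C := (1 : ℝ))
      measure_Ioo_lt_top.ne).mul_prod
      (integrableOn_mul_exp_neg_div_Ioi (mul_pos hk (hs.trans_le hst)))
    rw [Measure.prod_restrict] at hdom
    refine hdom.mono' (by fun_prop) ?_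
    rw [ae_restrict_iff' (measurableSet_Ioo.prod measurableSet_Ioi)]
    filter_upwards with x ⟨⟨hx₁, hx₁'⟩, hx₂⟩
    have hx₂ : 0 < x.2 := hx₂
    rw [one_mul, Real.norm_of_nonneg (by positivity)]
    gcongr
    exact mul_pos hk (hs.trans hx₁)
  rw [Measure.volume_eq_prod, setIntegral_prod _ hint]
  calc ∫ v in Ioo s t, ∫ u in Ioi 0, u * exp (-(u / (k * v)))
      = ∫ v in Ioo s t, k ^ 2 * v ^ 2 := by
        refine setIntegral_congr_fun measurableSet_Ioo fun v hv => ?_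
        rw [integral_mul_exp_neg_div_Ioi (mul_pos hk (hs.trans hv.1)), mul_pow]
    _ = k ^ 2 * (t ^ 3 - s ^ 3) / 3 := by
        rw [← integral_Ioc_eq_integral_Ioo, ← intervalIntegral.integral_of_le hst,
          intervalIntegral.integral_const_mul, integral_pow]
        ring

theorem setOf_ae_eq_image_coneChart {a₁ a₂ : ℝ} (ha₁ : -1 < a₁) (ha₁₂ : a₁ < a₂) (ha₁_lt : a₁ < 1) :
    {A : ℝ × ℝ | 0 < A.1 ∧ 0 < A.2 ∧ A.1 * a₂ - A.2 * a₁ ≤ |A.1 - A.2| ∧ A.1 < A.2}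
      =ᵐ[volume] coneChart (1 - a₁) (1 - a₂) '' (Ioo (1 / 2) (1 / (1 - a₁)) ×ˢ Ioi 0) := by
  have hp : 0 < 1 - a₁ := by linarith
  rw [image_coneChart (by intro h; linarith) fun x hx => hx.2.ne']
  refine ae_eq_set.2 ⟨measure_mono_null ?_ (volume_setOf_snd_eq_zero
    (f := fun a => a * (1 + a₂) / (1 + a₁)) (by fun_prop)), ?_⟩
  · rintro A ⟨⟨hA₁, hA₂, hA, hA₁₂⟩, hAG⟩
    rw [abs_sub_comm, abs_of_pos (sub_pos.2 hA₁₂)] at hA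
    have hu : 0 < A.2 * (1 - a₁) - A.1 * (1 - a₂) := by nlinarith
    simp only [mem_ofPred_eq, mem_prod, mem_Ioo, mem_Ioi, not_and_or, not_lt, ne_eq, not_not] at hAG
    rw [div_le_div_iff₀ hu two_pos, div_le_div_iff₀ hp hu] at hAG
    rw [mem_ofPred_eq, eq_div_iff (by linarith)]
    rcases hAG with hu' | (hv | hv) | hu' <;> nlinarith
  · refine measure_mono_null (fun A ⟨hAG, hAF⟩ => hAF ?_) measure_empty
    obtain ⟨-, ⟨hv₁, hv₂⟩, hu⟩ := hAG
    have hu : 0 < A.2 * (1 - a₁) - A.1 * (1 - a₂) := hu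
    rw [lt_div_iff₀ hu] at hv₁
    rw [div_lt_div_iff₀ hu hp] at hv₂
    have hA₁ : 0 < A.1 := by nlinarith
    have hA₁₂ : A.1 < A.2 := by linarith
    refine ⟨hA₁, by linarith, ?_, hA₁₂⟩
    rw [abs_sub_comm, abs_of_pos (sub_pos.2 hA₁₂)]
    linarith

theorem integral_Q2_minus (a₁ a₂ : ℝ)
    (h₁ : a₁ ∈ Set.Ioo (-1 : ℝ) 0) (h₂ : a₂ ∈ Set.Ioo (0 : ℝ) 1) :
    (∫ A in {A : ℝ × ℝ | 0 < A.1 ∧ 0 < A.2 ∧ A.1 * a₂ - A.2 * a₁ ≤ |A.1 - A.2| ∧ A.1 < A.2},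
        Real.exp (-((A.2 * (1 - a₁) - A.1 * (1 - a₂)) ^ 2 / (4 * (a₂ - a₁) * (A.2 - A.1)))))
      = (16 * (a₂ - a₁) / 3) * (1 / (1 - a₁) ^ 3 - 1 / 8) := by
  obtain ⟨ha₁, ha₁'⟩ := h₁
  obtain ⟨ha₂, -⟩ := h₂
  have hc : 0 < a₂ - a₁ := by linarith
  have hpq : 1 - a₁ ≠ 1 - a₂ := by intro h; linarith
  set S := Ioo (1 / 2 : ℝ) (1 / (1 - a₁)) ×ˢ Ioi (0 : ℝ)
  have hS : MeasurableSet S := measurableSet_Ioo.prod measurableSet_Ioi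
  rw [setIntegral_congr_set (setOf_ae_eq_image_coneChart ha₁ (by linarith) (by linarith)),
    setIntegral_image_coneChart hpq hS fun x hx => hx.2.ne']
  calc _ = ∫ x in S, (a₂ - a₁)⁻¹ * (x.2 * exp (-(x.2 / (4 * (a₂ - a₁) * x.1)))) := by
        refine setIntegral_congr_fun hS fun x ⟨_, hx₂⟩ => ?_
        have hx₂ : 0 < x.2 := hx₂
        rw [coneChart_snd_mul_sub hpq, coneChart_snd_sub_fst hpq, sub_sub_sub_cancel_left,
          abs_of_pos (div_pos hx₂ hc), smul_eq_mul]
        field_simp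
    _ = (16 * (a₂ - a₁) / 3) * (1 / (1 - a₁) ^ 3 - 1 / 8) := by
        rw [integral_const_mul, integral_Ioo_prod_Ioi_mul_exp_neg_div (by positivity) one_half_pos
          (by rw [div_le_div_iff₀ two_pos (by linarith)]; linarith)]
        field_simp
        ring
end

section
/- Define $p(a_1,a_2) = (a_2 - a_1)\big(\frac{4}{3(1+a_2)^3} + \frac{4}{3(1-a_1)^3} + \frac{1}{6}\big)$. Then for every $\mu \in [0,1]$, $\int_{-1}^{-\mu}\int_{\mu}^{1} p(a_1,a_2)\,da_2\,da_1 = \frac{(1-\mu)^2}{6}\Big(6 + \mu - \Big(\frac{2\mu}{1+\mu}\Big)^2\Big)$. -/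
/-!
After the substitution `a₁ = -x` the density becomes `(a₂ + x) * (w a₂ + w x)` with
`w y = 4 / (3 * (1 + y) ^ 3) + 1 / 12` (`beamWeight`), symmetric on the square `[μ, 1]²`.
Expanding the product separates the variables, so the double integral is
`2 * ((1 - μ) * ∫ y * w y + (1 - μ ^ 2) / 2 * ∫ w)`, and both one-variable integrals are
elementary since `y / (1 + y) ^ 3 = 1 / (1 + y) ^ 2 - 1 / (1 + y) ^ 3`.
-/

open MeasureTheory

theorem intervalIntegral.integral_integral_add_mul_add {h : ℝ → ℝ} {a b : ℝ}
    (hh : IntervalIntegrable h volume a b) :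
    ∫ x in a..b, ∫ y in a..b, (y + x) * (h y + h x)
      = 2 * ((b - a) * (∫ y in a..b, y * h y) + (b ^ 2 - a ^ 2) / 2 * ∫ y in a..b, h y) := by
  have hid : IntervalIntegrable (fun y : ℝ => y) volume a b := intervalIntegrable_id
  have hyh : IntervalIntegrable (fun y => y * h y) volume a b := hh.continuousOn_mul continuousOn_id
  have integral_inner (x : ℝ) : ∫ y in a..b, (y + x) * (h y + h x)
      = (∫ y in a..b, y * h y) + x * (∫ y in a..b, h y) + h x * ((b ^ 2 - a ^ 2) / 2)
        + (b - a) * (x * h x) := by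
    have hsplit : (fun y => (y + x) * (h y + h x))
        = fun y => (y * h y + x * h y) + (h x * y + x * h x) := by
      funext y; ring
    rw [hsplit, integral_add (hyh.add (hh.const_mul x))
        ((hid.const_mul _).add intervalIntegrable_const),
      integral_add hyh (hh.const_mul x), integral_add (hid.const_mul _) intervalIntegrable_const,
      integral_const_mul, integral_const_mul, integral_id, integral_const, smul_eq_mul]
    ring
  simp_rw [integral_inner]
  rw [integral_add ((intervalIntegrable_const.add (hid.mul_const _)).add (hh.mul_const _))
      (hyh.const_mul _),
    integral_add (intervalIntegrable_const.add (hid.mul_const _)) (hh.mul_const _),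
    integral_add intervalIntegrable_const (hid.mul_const _), integral_const, integral_mul_const,
    integral_mul_const, integral_const_mul, integral_id, smul_eq_mul]
  ring

noncomputable def beamWeight (y : ℝ) : ℝ := 4 / (3 * (1 + y) ^ 3) + 1 / 12

theorem hasDerivAt_antideriv_beamWeight {y : ℝ} (hy : y ≠ -1) :
    HasDerivAt (fun t => -2 / (3 * (1 + t) ^ 2) + t / 12) (beamWeight y) y := by
  have hy₁ : 1 + y ≠ 0 := fun h => hy (by linarith)
  have hlin : HasDerivAt (fun t : ℝ => 1 + t) 1 y := (hasDerivAt_id y).const_add 1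
  have := ((hasDerivAt_const y (-2 : ℝ)).div ((hlin.pow 2).const_mul 3) (by simp [hy₁])).add
    ((hasDerivAt_id y).div_const 12)
  refine this.congr_deriv ?_
  simp only [beamWeight, Pi.pow_apply]
  field_simp
  ring

theorem hasDerivAt_antideriv_mul_beamWeight {y : ℝ} (hy : y ≠ -1) :
    HasDerivAt (fun t => 2 / (3 * (1 + t) ^ 2) - 4 / (3 * (1 + t)) + t ^ 2 / 24)
      (y * beamWeight y) y := by
  have hy₁ : 1 + y ≠ 0 := fun h => hy (by linarith)
  have hlin : HasDerivAt (fun t : ℝ => 1 + t) 1 y := (hasDerivAt_id y).const_add 1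
  have := (((hasDerivAt_const y (2 : ℝ)).div ((hlin.pow 2).const_mul 3) (by simp [hy₁])).sub
    ((hasDerivAt_const y (4 : ℝ)).div (hlin.const_mul 3) (by simp [hy₁]))).add
    ((hasDerivAt_pow 2 y).div_const 24)
  refine this.congr_deriv ?_
  simp only [beamWeight, Pi.pow_apply]
  field_simp
  ring

theorem continuousOn_beamWeight : ContinuousOn beamWeight {-1}ᶜ := by
  intro y hy
  have : 1 + y ≠ 0 := fun h => hy (by rw [Set.mem_singleton_iff]; linarith)
  unfold beamWeight
  fun_prop (disch := positivity)

theorem integral_beamWeight {a b : ℝ} (hab : (-1 : ℝ) ∉ Set.uIcc a b) :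
    ∫ y in a..b, beamWeight y = 2 / (3 * (1 + a) ^ 2) - 2 / (3 * (1 + b) ^ 2) + (b - a) / 12 := by
  have hsub : Set.uIcc a b ⊆ {-1}ᶜ := Set.subset_compl_singleton_iff.mpr hab
  rw [intervalIntegral.integral_eq_sub_of_hasDerivAt
    (fun y hy => hasDerivAt_antideriv_beamWeight (hsub hy))
    (continuousOn_beamWeight.mono hsub).intervalIntegrable]
  ring

theorem integral_mul_beamWeight {a b : ℝ} (hab : (-1 : ℝ) ∉ Set.uIcc a b) :
    ∫ y in a..b, y * beamWeight y
      = 2 / (3 * (1 + b) ^ 2) - 4 / (3 * (1 + b)) - 2 / (3 * (1 + a) ^ 2) + 4 / (3 * (1 + a))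
        + (b ^ 2 - a ^ 2) / 24 := by
  have hsub : Set.uIcc a b ⊆ {-1}ᶜ := Set.subset_compl_singleton_iff.mpr hab
  rw [intervalIntegral.integral_eq_sub_of_hasDerivAt
    (fun y hy => hasDerivAt_antideriv_mul_beamWeight (hsub hy))
    ((continuousOn_beamWeight.mono hsub).intervalIntegrable.continuousOn_mul continuousOn_id)]
  ring

theorem beam_equilibrium_probability (μ : ℝ) (h : μ ∈ Set.Icc (0 : ℝ) 1) :
    (∫ a₁ in (-1 : ℝ)..(-μ), ∫ a₂ in μ..1,
        (a₂ - a₁) * (4 / (3 * (1 + a₂) ^ 3) + 4 / (3 * (1 - a₁) ^ 3) + 1 / 6))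
      = ((1 - μ) ^ 2 / 6) * (6 + μ - (2 * μ / (1 + μ)) ^ 2) := by
  have hμ : (-1 : ℝ) ∉ Set.uIcc μ 1 := by
    rw [Set.uIcc_of_le h.2, Set.mem_Icc]
    exact fun hm => by linarith [h.1, hm.1]
  calc (∫ a₁ in (-1 : ℝ)..(-μ), ∫ a₂ in μ..1,
        (a₂ - a₁) * (4 / (3 * (1 + a₂) ^ 3) + 4 / (3 * (1 - a₁) ^ 3) + 1 / 6))
      = ∫ x in μ..1, ∫ y in μ..1, (y + x) * (beamWeight y + beamWeight x) := by
        rw [← intervalIntegral.integral_comp_neg]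
        refine intervalIntegral.integral_congr fun x _ =>
          intervalIntegral.integral_congr fun y _ => ?_
        simp only [beamWeight]
        ring
    _ = 2 * ((1 - μ) * (∫ y in μ..1, y * beamWeight y)
          + (1 ^ 2 - μ ^ 2) / 2 * ∫ y in μ..1, beamWeight y) :=
        intervalIntegral.integral_integral_add_mul_add
          (continuousOn_beamWeight.mono (Set.subset_compl_singleton_iff.mpr hμ)).intervalIntegrable
    _ = ((1 - μ) ^ 2 / 6) * (6 + μ - (2 * μ / (1 + μ)) ^ 2) := by
        rw [integral_mul_beamWeight hμ, integral_beamWeight hμ]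
        have : 1 + μ ≠ 0 := by linarith [h.1]
        field_simp
        ring
end

section
/- Let $\sigma_0, \sigma_x, \sigma_y \in \mathbb{R}$ and set $B^+ = \{\alpha \in [0,2\pi) : \sigma_x \cos\alpha + \sigma_y \sin\alpha + \sigma_0 \ge 0\}$. Then $\lim_{N \to \infty} \sum_{\substack{1 \le j \le N \\ 2\pi j / N \bmod 2\pi \in B^+}} \log\Big(1 - \frac{\sigma_0 + \sigma_x \cos(2\pi j/N) + \sigma_y \sin(2\pi j/N)}{N}\Big) = -\frac{1}{2\pi}\int_{B^+} \big(\sigma_0 + \sigma_x \cos\varphi + \sigma_y \sin\varphi\big)\,d\varphi$ (for all sufficiently large $N$ every argument of the logarithm is positive, so the sum is eventually well defined). -/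
/-!
Angles with a negative gap contribute `log 1 = 0`, so the sum equals
`∑ j ∈ Icc 1 N, log (1 - g (2πj/N) / N)` for the positive part `g` of the gap, a Lipschitz
function. Since `log (1 - u) = -u + O(u²)`, this is within `O(1/N)` of `-1/(2π)` times a
right-endpoint Riemann sum of `g` over `[0, 2π]`, which for a Lipschitz function is within `O(1/N)`
of the integral. Finally, the integral of the gap over `B⁺` is the integral of `g` over `[0, 2π]`.
-/

open Real Filter MeasureTheory Finset Topology
open scoped NNReal

lemma abs_log_one_sub_add_le {u : ℝ} (hu : |u| ≤ 1 / 2) : |log (1 - u) + u| ≤ 2 * u ^ 2 := by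
  have h := abs_log_sub_add_sum_range_le (hu.trans_lt (by norm_num)) 1
  simp only [sum_range_one, zero_add, pow_one, Nat.cast_zero, div_one, one_add_one_eq_two,
    sq_abs] at h
  rw [add_comm]
  calc |u + log (1 - u)| ≤ u ^ 2 / (1 - |u|) := h
    _ ≤ u ^ 2 / (1 / 2) := by gcongr; linarith
    _ = 2 * u ^ 2 := by ring

lemma tendsto_sum_log_one_sub_div_add_div {a : ℕ → ℕ → ℝ} {C : ℝ}
    (ha : ∀ N, ∀ j ∈ Icc 1 N, |a N j| ≤ C) :
    Tendsto (fun N : ℕ => ∑ j ∈ Icc 1 N, (log (1 - a N j / N) + a N j / N)) atTop (𝓝 0) := by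
  refine squeeze_zero_norm' ?_ (tendsto_const_div_atTop_nhds_zero_nat (2 * C ^ 2))
  filter_upwards [eventually_gt_atTop 0, eventually_ge_atTop ⌈2 * C⌉₊] with N hN hCN
  have hN' : (0 : ℝ) < N := by exact_mod_cast hN
  have hCN' : 2 * C ≤ N := (Nat.ceil_le).1 hCN
  calc ‖∑ j ∈ Icc 1 N, (log (1 - a N j / N) + a N j / N)‖
      ≤ ∑ j ∈ Icc 1 N, 2 * (C / N) ^ 2 := by
        refine (norm_sum_le _ _).trans (sum_le_sum fun j hj => ?_)
        have hj : |a N j / N| ≤ C / N := by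
          rw [abs_div, Nat.abs_cast]
          gcongr
          exact ha N j hj
        refine (abs_log_one_sub_add_le (hj.trans ?_)).trans ?_
        · rw [div_le_iff₀ hN']
          linarith
        · rw [← sq_abs]
          gcongr
    _ = 2 * C ^ 2 / N := by
        rw [sum_const, Nat.card_Icc, add_tsub_cancel_right, nsmul_eq_mul]
        field_simp

namespace LipschitzWith

variable {g : ℝ → ℝ} {K : ℝ≥0}

lemma abs_mul_sub_integral_le (hg : LipschitzWith K g) {a b : ℝ} (hab : a ≤ b) :
    |g b * (b - a) - ∫ x in a..b, g x| ≤ K * (b - a) ^ 2 := by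
  rw [mul_comm, ← smul_eq_mul, ← intervalIntegral.integral_const,
    ← intervalIntegral.integral_sub intervalIntegrable_const (hg.continuous.intervalIntegrable a b),
    ← Real.norm_eq_abs, sq, ← mul_assoc, ← abs_of_nonneg (sub_nonneg.2 hab)]
  refine intervalIntegral.norm_integral_le_of_norm_le_const fun x hx => ?_
  rw [Set.uIoc_of_le hab] at hx
  calc ‖g b - g x‖ ≤ K * |b - x| := by simpa [Real.dist_eq] using hg.dist_le_mul b x
    _ ≤ K * |b - a| := by
        gcongr
        · linarith [hx.2]
        · linarith [hx.1]

lemma abs_riemannSum_sub_integral_le (hg : LipschitzWith K g) {T : ℝ} (hT : 0 ≤ T)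
    {N : ℕ} (hN : 0 < N) :
    |∑ j ∈ Icc 1 N, g (T * j / N) * (T / N) - ∫ x in 0..T, g x| ≤ K * T ^ 2 / N := by
  have hN' : (0 : ℝ) < N := by exact_mod_cast hN
  set a : ℕ → ℝ := fun i => T * i / N with ha
  have hstep : ∀ i, a (i + 1) - a i = T / N := fun i => by simp only [ha]; push_cast; ring
  have hsplit : ∫ x in 0..T, g x = ∑ i ∈ range N, ∫ x in a i..a (i + 1), g x := by
    rw [intervalIntegral.sum_integral_adjacent_intervals
      fun i _ => hg.continuous.intervalIntegrable _ _]
    simp only [ha, Nat.cast_zero, mul_zero, zero_div, mul_div_cancel_right₀ _ hN'.ne']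
  rw [← Ico_add_one_right_eq_Icc, sum_Ico_eq_sum_range, add_tsub_cancel_right, hsplit,
    ← sum_sub_distrib]
  calc |∑ i ∈ range N, (g (T * ↑(1 + i) / N) * (T / N) - ∫ x in a i..a (i + 1), g x)|
      ≤ ∑ i ∈ range N, |g (a (i + 1)) * (a (i + 1) - a i) - ∫ x in a i..a (i + 1), g x| := by
        refine (abs_sum_le_sum_abs _ _).trans_eq (sum_congr rfl fun i _ => ?_)
        rw [hstep, add_comm 1 i]
    _ ≤ ∑ i ∈ range N, K * (T / N) ^ 2 := by
        gcongr with i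
        rw [← hstep]
        exact hg.abs_mul_sub_integral_le (by linarith [hstep i, div_nonneg hT hN'.le])
    _ = K * T ^ 2 / N := by
        rw [sum_const, card_range, nsmul_eq_mul]
        field_simp

lemma tendsto_riemannSum (hg : LipschitzWith K g) {T : ℝ} (hT : 0 ≤ T) :
    Tendsto (fun N : ℕ => ∑ j ∈ Icc 1 N, g (T * j / N) * (T / N)) atTop
      (𝓝 (∫ x in 0..T, g x)) := by
  rw [← tendsto_sub_nhds_zero_iff]
  refine squeeze_zero_norm' ?_ (tendsto_const_div_atTop_nhds_zero_nat (K * T ^ 2))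
  filter_upwards [eventually_gt_atTop 0] with N hN
  exact hg.abs_riemannSum_sub_integral_le hT hN

theorem tendsto_sum_log_one_sub_div (hg : LipschitzWith K g) {T : ℝ} (hT : 0 < T) :
    Tendsto (fun N : ℕ => ∑ j ∈ Icc 1 N, log (1 - g (T * j / N) / N)) atTop
      (𝓝 (-(1 / T) * ∫ x in 0..T, g x)) := by
  have hbound : ∀ N : ℕ, ∀ j ∈ Icc 1 N, |g (T * j / N)| ≤ |g 0| + K * T := by
    intro N j hj
    have hjN : (j : ℝ) ≤ N := by exact_mod_cast (mem_Icc.1 hj).2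
    have hx : |T * j / N| ≤ T := by
      rw [abs_of_nonneg (by positivity), mul_div_assoc]
      exact mul_le_of_le_one_right hT.le (div_le_one_of_le₀ hjN (Nat.cast_nonneg N))
    have := hg.dist_le_mul (T * j / N) 0
    rw [Real.dist_eq, Real.dist_eq, sub_zero] at this
    calc |g (T * j / N)| ≤ |g 0| + |g (T * j / N) - g 0| := by
          linarith [abs_sub_abs_le_abs_sub (g (T * j / N)) (g 0)]
      _ ≤ |g 0| + K * T := by gcongr; exact this.trans (by gcongr)
  have hlim := (tendsto_sum_log_one_sub_div_add_div hbound).sub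
    ((hg.tendsto_riemannSum hT.le).const_mul (1 / T))
  rw [zero_sub, ← neg_mul] at hlim
  refine hlim.congr fun N => ?_
  rw [mul_sum, ← sum_sub_distrib]
  refine sum_congr rfl fun j _ => ?_
  field_simp
  ring

end LipschitzWith

lemma setIntegral_setOf_mem_Ico_and_nonneg {f : ℝ → ℝ} (hf : Measurable f) {a b : ℝ}
    (hab : a ≤ b) :
    ∫ x in {x | x ∈ Set.Ico a b ∧ 0 ≤ f x}, f x = ∫ x in a..b, max (f x) 0 := by
  have hindicator : {x | 0 ≤ f x}.indicator f = fun x => max (f x) 0 := by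
    ext x
    by_cases hx : 0 ≤ f x
    · simp [hx]
    · simp [hx, (not_le.1 hx).le]
  rw [intervalIntegral.integral_of_le hab, ← integral_Ico_eq_integral_Ioc, ← hindicator,
    setIntegral_indicator (measurableSet_le measurable_const hf)]
  rfl

lemma Function.Periodic.sub_mul_floor_div_mem_iff {f : ℝ → ℝ} {T : ℝ} (hf : Function.Periodic f T)
    (hT : 0 < T) (θ : ℝ) :
    θ - T * ⌊θ / T⌋ ∈ {α | α ∈ Set.Ico 0 T ∧ 0 ≤ f α} ↔ 0 ≤ f θ := by
  rw [mul_comm]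
  simp only [Set.mem_ofPred_eq, Set.mem_Ico, hf.sub_int_mul_eq, Int.sub_floor_div_mul_nonneg θ hT,
    Int.sub_floor_div_mul_lt θ hT, and_self, true_and]

open scoped Classical in
theorem log_prob_limit_circle (σ₀ σx σy : ℝ) :
    Tendsto
      (fun N : ℕ => ∑ j ∈ (Finset.Icc 1 N).filter (fun j : ℕ =>
          (2 * π * (j : ℝ) / N - 2 * π * ⌊(2 * π * (j : ℝ) / N) / (2 * π)⌋ : ℝ) ∈
            {α : ℝ | α ∈ Set.Ico 0 (2 * π) ∧ 0 ≤ σx * Real.cos α + σy * Real.sin α + σ₀}),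
        Real.log (1 - (σ₀ + σx * Real.cos (2 * π * (j : ℝ) / N)
          + σy * Real.sin (2 * π * (j : ℝ) / N)) / N))
      atTop
      (nhds (-(1 / (2 * π)) *
        ∫ φ in {α : ℝ | α ∈ Set.Ico 0 (2 * π) ∧ 0 ≤ σx * Real.cos α + σy * Real.sin α + σ₀},
          (σ₀ + σx * Real.cos φ + σy * Real.sin φ))) := by
  set f : ℝ → ℝ := fun φ => σ₀ + σx * cos φ + σy * sin φ
  have hB : {α : ℝ | α ∈ Set.Ico 0 (2 * π) ∧ 0 ≤ σx * cos α + σy * sin α + σ₀}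
      = {α | α ∈ Set.Ico 0 (2 * π) ∧ 0 ≤ f α} := by
    ext α
    simp only [f]
    ring_nf
  have hf_periodic : Function.Periodic f (2 * π) := fun φ => by simp [f]
  have hf_lipschitz : LipschitzWith (‖σx‖₊ + ‖σy‖₊) f := by
    simpa [f] using ((LipschitzWith.const σ₀).add
      ((lipschitzWith_smul σx).comp lipschitzWith_cos)).add
      ((lipschitzWith_smul σy).comp lipschitzWith_sin)
  simp only [hB]
  rw [setIntegral_setOf_mem_Ico_and_nonneg hf_lipschitz.continuous.measurable two_pi_pos.le]
  refine ((hf_lipschitz.max_const 0).tendsto_sum_log_one_sub_div two_pi_pos).congr fun N => ?_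
  rw [sum_filter]
  refine sum_congr rfl fun j _ => ?_
  rw [if_congr (hf_periodic.sub_mul_floor_div_mem_iff two_pi_pos _) rfl rfl]
  split_ifs with h
  · rw [max_eq_left h]
  · rw [max_eq_right (not_le.1 h).le, zero_div, sub_zero, log_one]
end

section
/- Let $\sigma_0 > 0$ and $\sigma_x, \sigma_y \in \mathbb{R}$ satisfy $\sigma_x^2 + \sigma_y^2 \ge \sigma_0^2$. Set $\varphi_\sigma = \arccos\big(-\sigma_0/\sqrt{\sigma_x^2+\sigma_y^2}\big)$ and $B^+ = \{\varphi \in [0,2\pi) : \sigma_x\cos\varphi + \sigma_y\sin\varphi + \sigma_0 \ge 0\}$. Then $\frac{1}{2\pi\sigma_0}\int_{B^+} \big(\sigma_x\cos\varphi + \sigma_y\sin\varphi + \sigma_0\big)\,d\varphi = \frac{1}{\pi}\big(\varphi_\sigma - \tan\varphi_\sigma\big)$. -/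
/-!
Write `σx cos φ + σy sin φ = r cos (φ - α)` with `r = √(σx² + σy²)`. By periodicity the integral
over `B⁺` becomes `∫_{-π}^{π} max (r cos θ + σ₀) 0 dθ`, and the integrand is positive exactly on
`|θ| ≤ φσ`, since `cos φσ = -σ₀ / r`. Hence the integral is `2 (r sin φσ + σ₀ φσ)`, and
`r sin φσ / σ₀ = -tan φσ`.
-/

open Real MeasureTheory Set intervalIntegral

lemma exists_mul_cos_add_mul_sin_eq (a b : ℝ) :
    ∃ α, ∀ φ, a * cos φ + b * sin φ = √(a ^ 2 + b ^ 2) * cos (φ - α) := by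
  have hnorm : ‖(⟨a, b⟩ : ℂ)‖ = √(a ^ 2 + b ^ 2) := by
    rw [Complex.norm_def, Complex.normSq_mk]; ring_nf
  have hre : ‖(⟨a, b⟩ : ℂ)‖ * cos (Complex.arg ⟨a, b⟩) = a := Complex.norm_mul_cos_arg _
  have him : ‖(⟨a, b⟩ : ℂ)‖ * sin (Complex.arg ⟨a, b⟩) = b := Complex.norm_mul_sin_arg _
  refine ⟨Complex.arg ⟨a, b⟩, fun φ => ?_⟩
  rw [cos_sub, ← hnorm]
  linear_combination (-cos φ) * hre - sin φ * him

lemma setIntegral_inter_setOf_nonneg {α : Type*} [MeasurableSpace α] {μ : Measure α}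
    (s : Set α) {g : α → ℝ} (hg : Measurable g) :
    ∫ x in s ∩ {x | 0 ≤ g x}, g x ∂μ = ∫ x in s, max (g x) 0 ∂μ := by
  rw [← setIntegral_indicator (measurableSet_le measurable_const hg)]
  congr 1 with x
  by_cases hx : 0 ≤ g x
  · simp [indicator_of_mem, hx]
  · simp [indicator_of_notMem, hx, (not_le.1 hx).le]

lemma Function.Periodic.setIntegral_Ico_comp_sub {E : Type*} [NormedAddCommGroup E]
    [NormedSpace ℝ E] {f : ℝ → E} {T : ℝ} (hf : Function.Periodic f T) (hT : 0 ≤ T)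
    (a α b : ℝ) : ∫ x in Ico a (a + T), f (x - α) = ∫ x in b..b + T, f x := by
  rw [integral_Ico_eq_integral_Ioc, ← integral_of_le (by linarith), integral_comp_sub_right,
    show a + T - α = a - α + T by ring]
  exact hf.intervalIntegral_add_eq _ _

lemma cos_arccos_neg_div {r s : ℝ} (hr : 0 < r) (hs : |s| ≤ r) :
    cos (arccos (-s / r)) = -s / r := by
  have ⟨hl, hu⟩ := abs_le.1 hs
  exact cos_arccos (by rw [le_div_iff₀ hr]; linarith) (by rw [div_le_iff₀ hr]; linarith)

lemma mul_cos_add_nonneg_iff {r s θ : ℝ} (hr : 0 < r) (hs : |s| ≤ r) (hθ : |θ| ≤ π) :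
    0 ≤ r * cos θ + s ↔ |θ| ≤ arccos (-s / r) :=
  calc 0 ≤ r * cos θ + s ↔ cos (arccos (-s / r)) ≤ cos |θ| := by
        rw [cos_abs, cos_arccos_neg_div hr hs, div_le_iff₀ hr]; constructor <;> intro <;> linarith
    _ ↔ |θ| ≤ arccos (-s / r) :=
        strictAntiOn_cos.le_iff_ge ⟨arccos_nonneg _, arccos_le_pi _⟩ ⟨abs_nonneg θ, hθ⟩

lemma mul_cos_add_nonpos_iff {r s θ : ℝ} (hr : 0 < r) (hs : |s| ≤ r) (hθ : |θ| ≤ π) :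
    r * cos θ + s ≤ 0 ↔ arccos (-s / r) ≤ |θ| :=
  calc r * cos θ + s ≤ 0 ↔ cos |θ| ≤ cos (arccos (-s / r)) := by
        rw [cos_abs, cos_arccos_neg_div hr hs, le_div_iff₀ hr]; constructor <;> intro <;> linarith
    _ ↔ arccos (-s / r) ≤ |θ| :=
        strictAntiOn_cos.le_iff_ge ⟨abs_nonneg θ, hθ⟩ ⟨arccos_nonneg _, arccos_le_pi _⟩

lemma integral_max_mul_cos_add_zero {r s : ℝ} (hr : 0 < r) (hs : |s| ≤ r) :
    ∫ θ in -π..π, max (r * cos θ + s) 0 =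
      2 * (r * sin (arccos (-s / r)) + s * arccos (-s / r)) := by
  set φ := arccos (-s / r)
  have hφ : φ ≤ π := arccos_le_pi _
  have hφ₀ : 0 ≤ φ := arccos_nonneg _
  have hcont : Continuous fun θ => max (r * cos θ + s) 0 := by fun_prop
  have houter {a b : ℝ} (hab : a ≤ b) (h : ∀ θ ∈ Icc a b, φ ≤ |θ| ∧ |θ| ≤ π) :
      ∫ θ in a..b, max (r * cos θ + s) 0 = 0 := by
    refine (integral_congr fun θ hθ => ?_).trans integral_zero
    rw [uIcc_of_le hab] at hθ
    exact max_eq_right ((mul_cos_add_nonpos_iff hr hs (h θ hθ).2).2 (h θ hθ).1)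
  have hinner : ∫ θ in -φ..φ, max (r * cos θ + s) 0 = ∫ θ in -φ..φ, (r * cos θ + s) := by
    refine integral_congr fun θ hθ => max_eq_left ?_
    rw [uIcc_of_le (by linarith), mem_Icc, ← abs_le] at hθ
    exact (mul_cos_add_nonneg_iff hr hs (hθ.trans hφ)).2 hθ
  rw [← integral_add_adjacent_intervals (hcont.intervalIntegrable (-π) (-φ))
      (hcont.intervalIntegrable (-φ) π),
    ← integral_add_adjacent_intervals (hcont.intervalIntegrable (-φ) φ)
      (hcont.intervalIntegrable φ π), hinner,
    houter (by linarith) fun θ hθ => ?_, houter hφ fun θ hθ => ?_]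
  · rw [integral_add (intervalIntegrable_cos.const_mul r) intervalIntegrable_const,
      intervalIntegral.integral_const_mul, integral_cos, intervalIntegral.integral_const, sin_neg,
      smul_eq_mul]
    ring
  all_goals
    rw [mem_Icc] at hθ
    rw [le_abs, abs_le]
    refine ⟨?_, ?_, ?_⟩ <;> first | (left; linarith) | (right; linarith) | linarith

theorem arc_integral_calA (σ₀ σx σy : ℝ) (h₀ : 0 < σ₀) (h : σ₀ ^ 2 ≤ σx ^ 2 + σy ^ 2) :
    (1 / (2 * π * σ₀)) *
      (∫ φ in {φ : ℝ | φ ∈ Set.Ico 0 (2 * π) ∧ 0 ≤ σx * Real.cos φ + σy * Real.sin φ + σ₀},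
        (σx * Real.cos φ + σy * Real.sin φ + σ₀))
    = (1 / π) * (Real.arccos (-σ₀ / Real.sqrt (σx ^ 2 + σy ^ 2))
        - Real.tan (Real.arccos (-σ₀ / Real.sqrt (σx ^ 2 + σy ^ 2)))) := by
  obtain ⟨α, hrot⟩ := exists_mul_cos_add_mul_sin_eq σx σy
  set r := √(σx ^ 2 + σy ^ 2)
  have hσ₀r : σ₀ ≤ r := (le_sqrt h₀.le (by positivity)).2 h
  have hr : 0 < r := h₀.trans_le hσ₀r
  have hs : |σ₀| ≤ r := by rwa [abs_of_pos h₀]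
  have hperiodic : Function.Periodic (fun θ => max (r * cos θ + σ₀) 0) (2 * π) := fun θ => by
    simp only [cos_add_two_pi]
  have harc : (∫ φ in {φ : ℝ | φ ∈ Ico 0 (2 * π) ∧ 0 ≤ σx * cos φ + σy * sin φ + σ₀},
      (σx * cos φ + σy * sin φ + σ₀)) = ∫ θ in -π..π, max (r * cos θ + σ₀) 0 := by
    rw [← inter_ofPred_eq_sep, setIntegral_inter_setOf_nonneg _ (by fun_prop)]
    simp only [hrot]
    simpa [two_mul] using hperiodic.setIntegral_Ico_comp_sub (by positivity) 0 α (-π)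
  rw [harc, integral_max_mul_cos_add_zero hr hs, tan_eq_sin_div_cos, cos_arccos_neg_div hr hs]
  field_simp
  ring
end

section
/- Let $\vartheta_1,\vartheta_2,\vartheta_3 \in (0,\pi)$ with $\vartheta_1+\vartheta_2+\vartheta_3 = 2\pi$ and not all equal to $2\pi/3$. Set $c_i = \cot(\vartheta_i/2)$ (so $c_i > 0$), $\lambda = \sqrt{(c_1+c_2+c_3)^2 - 3} > 0$, and with indices in the cyclic group $\mathbb{Z}_3$ define $a_i = \dfrac{c_i(c_1+c_2+c_3) - (c_1^2+c_2^2+c_3^2)}{(c_{i-1}+c_{i+1})\lambda}$ and $b_i = \dfrac{c_{i-1}-c_{i+1}}{(c_{i-1}+c_{i+1})\lambda}$. Then for each $i \in \{1,2,3\}$: (a) $a_i^2 + b_i^2 = 1$; (b) $a_{i+1} b_{i-1} - a_{i-1} b_{i+1} = \sin\vartheta_i$; (c) $b_{i+1} b_{i-1} + a_{i+1} a_{i-1} = \cos\vartheta_i$. -/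
/-!
With `c = cot (ϑ / 2)` the half-angle formulas read `sin ϑ = 2c / (1 + c²)` and
`cos ϑ = (c² - 1) / (1 + c²)`, and since the half angles sum to `π` the cotangents satisfy
`c₁c₂ + c₂c₃ + c₃c₁ = 1`. Under that relation `λ² = (c₁ + c₂ + c₃)² - 3` is half the sum of the
squared differences of the `cᵢ`, so it is positive off the equilateral case, and the three
identities become polynomial identities modulo `c₁c₂ + c₂c₃ + c₃c₁ = 1` and `λ² = (∑ cᵢ)² - 3`.
-/

open Real

lemma sin_eq_two_cot_half_div {θ : ℝ} (h : sin (θ / 2) ≠ 0) :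
    sin θ = 2 * cot (θ / 2) / (1 + cot (θ / 2) ^ 2) := by
  conv_lhs => rw [show θ = 2 * (θ / 2) by ring, sin_two_mul]
  rw [cot_eq_cos_div_sin]
  field_simp
  linear_combination cos (θ / 2) * sin_sq_add_cos_sq (θ / 2)

lemma cos_eq_cot_half_sq_sub_one_div {θ : ℝ} (h : sin (θ / 2) ≠ 0) :
    cos θ = (cot (θ / 2) ^ 2 - 1) / (1 + cot (θ / 2) ^ 2) := by
  conv_lhs => rw [show θ = 2 * (θ / 2) by ring, cos_two_mul]
  rw [cot_eq_cos_div_sin]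
  field_simp
  linear_combination 2 * cos (θ / 2) ^ 2 * sin_sq_add_cos_sq (θ / 2)

lemma cot_mul_cot_add_cot_mul_cot_add_cot_mul_cot_of_add_add_eq_pi {x y z : ℝ}
    (hx : sin x ≠ 0) (hy : sin y ≠ 0) (hz : sin z ≠ 0) (h : x + y + z = π) :
    cot x * cot y + cot y * cot z + cot z * cot x = 1 := by
  have hsin : sin (x + y + z) = 0 := h ▸ sin_pi
  rw [sin_add, sin_add, cos_add] at hsin
  simp only [cot_eq_cos_div_sin]
  field_simp
  linear_combination hsin

lemma sin_half_pos {θ : ℝ} (h : θ ∈ Set.Ioo 0 (2 * π)) : 0 < sin (θ / 2) :=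
  sin_pos_of_pos_of_lt_pi (by linarith [h.1]) (by linarith [h.2])

lemma cot_half_pos {θ : ℝ} (h : θ ∈ Set.Ioo 0 π) : 0 < cot (θ / 2) := by
  rw [cot_eq_cos_div_sin]
  exact div_pos (cos_pos_of_mem_Ioo ⟨by linarith [h.1, pi_pos], by linarith [h.2]⟩)
    (sin_half_pos ⟨h.1, by linarith [h.2, pi_pos]⟩)

lemma injOn_cot_half : Set.InjOn (fun θ ↦ cot (θ / 2)) (Set.Ioo 0 π) := by
  intro x hx y hy hxy
  have hcos {θ : ℝ} (hθ : θ ∈ Set.Ioo 0 π) :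
      cos θ = (cot (θ / 2) ^ 2 - 1) / (1 + cot (θ / 2) ^ 2) :=
    cos_eq_cot_half_sq_sub_one_div (sin_half_pos ⟨hθ.1, by linarith [hθ.2, pi_pos]⟩).ne'
  refine injOn_cos (Set.Ioo_subset_Icc_self hx) (Set.Ioo_subset_Icc_self hy) ?_
  rw [hcos hx, hcos hy, show cot (x / 2) = cot (y / 2) from hxy]

lemma three_lt_sq_add_add {x y z : ℝ} (hP : x * y + y * z + z * x = 1)
    (hne : ¬ (x = y ∧ y = z)) : 3 < (x + y + z) ^ 2 := by
  by_contra! h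
  refine hne ⟨?_, ?_⟩ <;> nlinarith [sq_nonneg (x - y), sq_nonneg (y - z), sq_nonneg (z - x)]

namespace ZMod

lemma three_add_one_add_one (i : ZMod 3) : i + 1 + 1 = i - 1 := by
  ring_nf; reduce_mod_char

lemma three_sub_one_sub_one (i : ZMod 3) : i - 1 - 1 = i + 1 := by
  ring_nf; reduce_mod_char

lemma three_eq_sub_one_or_eq_or_eq_add_one (i j : ZMod 3) : j = i - 1 ∨ j = i ∨ j = i + 1 := by
  revert i j; decide

lemma three_sum_rotate {M : Type*} [AddCommMonoid M] (f : ZMod 3 → M) (i : ZMod 3) :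
    f 0 + f 1 + f 2 = f (i - 1) + f i + f (i + 1) := by
  obtain rfl | rfl | rfl := three_eq_sub_one_or_eq_or_eq_add_one 1 i
  all_goals reduce_mod_char <;> abel

end ZMod

/-! In the three lemmas below `(x, y, z)` stands for `(c (i - 1), c i, c (i + 1))`. -/

section CotTriple

variable {x y z lam : ℝ}

lemma sq_add_sq_eq_one_of_cot_triple (hP : x * y + y * z + z * x = 1)
    (hlam : lam ^ 2 = (x + y + z) ^ 2 - 3) (hxz : x + z ≠ 0) (hlam0 : lam ≠ 0) :
    ((y * (x + y + z) - (x ^ 2 + y ^ 2 + z ^ 2)) / ((x + z) * lam)) ^ 2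
      + ((x - z) / ((x + z) * lam)) ^ 2 = 1 := by
  field_simp
  linear_combination (4 * (x * y + y * z + z * x) - 4 * (x + y + z) * (x + z)) * hP
    - (x + z) ^ 2 * hlam

lemma mul_sub_mul_eq_two_mul_div_of_cot_triple (hP : x * y + y * z + z * x = 1)
    (hlam : lam ^ 2 = (x + y + z) ^ 2 - 3) (hxy : y + x ≠ 0) (hyz : z + y ≠ 0)
    (hlam0 : lam ≠ 0) :
    (z * (x + y + z) - (x ^ 2 + y ^ 2 + z ^ 2)) / ((y + x) * lam) * ((z - y) / ((z + y) * lam))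
      - (x * (x + y + z) - (x ^ 2 + y ^ 2 + z ^ 2)) / ((z + y) * lam)
        * ((y - x) / ((y + x) * lam))
      = 2 * y / (1 + y ^ 2) := by
  field_simp
  linear_combination -2 * y * (y + x) * (y + z) * hlam
    - (4 * y * (y + x) * (y + z) + 2 * y * x ^ 2 + 2 * y * z ^ 2 + 4 * y ^ 3) * hP

lemma mul_add_mul_eq_sq_sub_one_div_of_cot_triple (hP : x * y + y * z + z * x = 1)
    (hlam : lam ^ 2 = (x + y + z) ^ 2 - 3) (hxy : y + x ≠ 0) (hyz : z + y ≠ 0)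
    (hlam0 : lam ≠ 0) :
    (y - x) / ((y + x) * lam) * ((z - y) / ((z + y) * lam))
      + (z * (x + y + z) - (x ^ 2 + y ^ 2 + z ^ 2)) / ((y + x) * lam)
        * ((x * (x + y + z) - (x ^ 2 + y ^ 2 + z ^ 2)) / ((z + y) * lam))
      = (y ^ 2 - 1) / (1 + y ^ 2) := by
  field_simp
  linear_combination (y + x) * (y + z) * (1 - y ^ 2) * hlam
    + (2 * (y + x) * (y + z) * (1 - y ^ 2) + 2 * (z * x + y ^ 2)
      - 2 * y ^ 2 * (x ^ 2 - z * x + z ^ 2 + y ^ 2)) * hP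

end CotTriple

theorem ab_trig_identities (ϑ : ZMod 3 → ℝ)
    (hϑ : ∀ i, ϑ i ∈ Set.Ioo 0 π)
    (hsum : ϑ 0 + ϑ 1 + ϑ 2 = 2 * π)
    (hne : ¬ ∀ i, ϑ i = 2 * π / 3)
    (c : ZMod 3 → ℝ) (hc : ∀ i, c i = Real.cot (ϑ i / 2))
    (lam : ℝ) (hlam : lam = Real.sqrt ((c 0 + c 1 + c 2) ^ 2 - 3))
    (a b : ZMod 3 → ℝ)
    (ha : ∀ i, a i = (c i * (c 0 + c 1 + c 2) - (c 0 ^ 2 + c 1 ^ 2 + c 2 ^ 2))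
      / ((c (i - 1) + c (i + 1)) * lam))
    (hb : ∀ i, b i = (c (i - 1) - c (i + 1)) / ((c (i - 1) + c (i + 1)) * lam)) :
    ∀ i, a i ^ 2 + b i ^ 2 = 1
      ∧ a (i + 1) * b (i - 1) - a (i - 1) * b (i + 1) = Real.sin (ϑ i)
      ∧ b (i + 1) * b (i - 1) + a (i + 1) * a (i - 1) = Real.cos (ϑ i) := by
  intro i
  have hsin_half (j : ZMod 3) : sin (ϑ j / 2) ≠ 0 :=
    (sin_half_pos ⟨(hϑ j).1, by linarith [(hϑ j).2, pi_pos]⟩).ne'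
  have hpos (j : ZMod 3) : 0 < c j := hc j ▸ cot_half_pos (hϑ j)
  have hsum_i : ϑ (i - 1) + ϑ i + ϑ (i + 1) = 2 * π := ZMod.three_sum_rotate ϑ i ▸ hsum
  have hP : c (i - 1) * c i + c i * c (i + 1) + c (i + 1) * c (i - 1) = 1 := by
    simp only [hc]
    exact cot_mul_cot_add_cot_mul_cot_add_cot_mul_cot_of_add_add_eq_pi
      (hsin_half _) (hsin_half _) (hsin_half _) (by linarith)
  have hc_ne : ¬ (c (i - 1) = c i ∧ c i = c (i + 1)) := by
    rintro ⟨h₁, h₂⟩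
    rw [hc, hc] at h₁ h₂
    have e₁ := injOn_cot_half (hϑ _) (hϑ _) h₁
    have e₂ := injOn_cot_half (hϑ _) (hϑ _) h₂
    refine hne fun j ↦ ?_
    obtain rfl | rfl | rfl := ZMod.three_eq_sub_one_or_eq_or_eq_add_one i j <;> linarith
  have hS := ZMod.three_sum_rotate c i
  have hQ := ZMod.three_sum_rotate (c · ^ 2) i
  have hrad_pos : 0 < (c 0 + c 1 + c 2) ^ 2 - 3 := by
    rw [hS]; linarith [three_lt_sq_add_add hP hc_ne]
  have hlam0 : lam ≠ 0 := hlam ▸ (sqrt_pos.mpr hrad_pos).ne'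
  have hlam_sq : lam ^ 2 = (c (i - 1) + c i + c (i + 1)) ^ 2 - 3 := by
    rw [hlam, sq_sqrt hrad_pos.le, hS]
  simp only [ha, hb, add_sub_cancel_right, sub_add_cancel, ZMod.three_add_one_add_one,
    ZMod.three_sub_one_sub_one, hS, hQ, sin_eq_two_cot_half_div (hsin_half i),
    cos_eq_cot_half_sq_sub_one_div (hsin_half i), ← hc]
  have hsum_ne (j k : ZMod 3) : c j + c k ≠ 0 := (add_pos (hpos j) (hpos k)).ne'
  exact ⟨sq_add_sq_eq_one_of_cot_triple hP hlam_sq (hsum_ne _ _) hlam0,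
    mul_sub_mul_eq_two_mul_div_of_cot_triple hP hlam_sq (hsum_ne _ _) (hsum_ne _ _) hlam0,
    mul_add_mul_eq_sq_sub_one_div_of_cot_triple hP hlam_sq (hsum_ne _ _) (hsum_ne _ _) hlam0⟩
end

section
/- Let $\vartheta_1,\vartheta_2,\vartheta_3 \in (0,\pi)$ with $\vartheta_1+\vartheta_2+\vartheta_3 = 2\pi$; set $\varphi_1 = 0$, $\varphi_2 = \vartheta_3$, $\varphi_3 = \vartheta_3 + \vartheta_1$, $\Delta = \sin\vartheta_1 + \sin\vartheta_2 + \sin\vartheta_3$, and for $A \in \mathbb{R}^3$ define $\sigma_0(A) = (A_1\sin\vartheta_1 + A_2\sin\vartheta_2 + A_3\sin\vartheta_3)/\Delta$, $\sigma_x(A) = \det\begin{pmatrix} A_1 & \sin\varphi_1 & 1 \\ A_2 & \sin\varphi_2 & 1 \\ A_3 & \sin\varphi_3 & 1 \end{pmatrix}/\Delta$, $\sigma_y(A) = \det\begin{pmatrix} \cos\varphi_1 & A_1 & 1 \\ \cos\varphi_2 & A_2 & 1 \\ \cos\varphi_3 & A_3 & 1 \end{pmatrix}/\Delta$. Then $\int_{B_1}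 e^{-\sigma_0(A)}\,dA = 8\pi\,\sin(\vartheta_1/2)\sin(\vartheta_2/2)\sin(\vartheta_3/2)$, where $B_1 = \{A \in \mathbb{R}^3 : A_1,A_2,A_3 > 0,\ \sigma_x(A)^2 + \sigma_y(A)^2 < \sigma_0(A)^2\}$. -/
/-!
The linear map `planeHeights φ₁ φ₂ φ₃` sends the coefficients `(s, x, y)` of the plane
`z = s + x X + y Y` to its heights `A` above the three points `(cos φᵢ, sin φᵢ)` of the unit circle.
By Cramer's rule its inverse is `A ↦ (σ₀ A, σx A, σy A)`, and its determinant is `Δ`. A plane that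
is positive on the closed unit disk has positive heights, so the map sends the cone
`√(x² + y²) < s` onto `B₁`. Changing variables, the integral becomes
`Δ ∫_cone e^{-s} = Δ ∫₀^∞ e^{-s} π s² ds = 2πΔ`, and `Δ = 4 ∏ sin (ϑᵢ / 2)` since `∑ ϑᵢ = 2π`.
-/

open Real MeasureTheory Set

theorem sin_add_sin_add_sin_of_add_eq_two_pi {a b c : ℝ} (h : a + b + c = 2 * π) :
    sin a + sin b + sin c = 4 * sin (a / 2) * sin (b / 2) * sin (c / 2) := by
  have hc : c / 2 = π - (a / 2 + b / 2) := by linarith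
  have double (t : ℝ) : sin t = 2 * sin (t / 2) * cos (t / 2) := by
    rw [← sin_two_mul, mul_div_cancel₀ t two_ne_zero]
  rw [double a, double b, double c, hc, sin_pi_sub, cos_pi_sub, sin_add, cos_add]
  linear_combination (-2 * sin (a / 2) * cos (a / 2)) * sin_sq_add_cos_sq (b / 2) +
    (-2 * sin (b / 2) * cos (b / 2)) * sin_sq_add_cos_sq (a / 2)

theorem add_cos_mul_add_sin_mul_pos {s x y : ℝ} (φ : ℝ) (hs : 0 < s)
    (h : x ^ 2 + y ^ 2 < s ^ 2) : 0 < s + cos φ * x + sin φ * y := by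
  have : (cos φ * x + sin φ * y) ^ 2 < s ^ 2 := by
    nlinarith [sq_nonneg (sin φ * x - cos φ * y), sin_sq_add_cos_sq φ]
  linarith [abs_lt_of_sq_lt_sq' this hs.le]

theorem volume_disk (c : ℝ) :
    volume {p : ℝ × ℝ | p.1 ^ 2 + p.2 ^ 2 < c ^ 2} = ENNReal.ofReal (π * c ^ 2) := by
  have hdisk : {p : ℝ × ℝ | p.1 ^ 2 + p.2 ^ 2 < c ^ 2} =
      Complex.measurableEquivRealProd.symm ⁻¹' Metric.ball 0 |c| := by
    ext p
    simp only [mem_ofPred_eq, mem_preimage, Metric.mem_ball, dist_zero_right,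
      Complex.norm_eq_sqrt_sq_add_sq, ← sqrt_sq_eq_abs]
    exact (sqrt_lt_sqrt_iff (by positivity)).symm
  rw [hdisk, Complex.volume_preserving_equiv_real_prod.symm.measure_preimage
    measurableSet_ball.nullMeasurableSet, Complex.volume_ball, ← ENNReal.ofReal_pow (abs_nonneg c),
    sq_abs, ← NNReal.coe_real_pi, ENNReal.ofReal_mul (by positivity), ENNReal.ofReal_coe_nnreal,
    mul_comm]

theorem setIntegral_image_linearMap {E F : Type*} [NormedAddCommGroup E] [NormedSpace ℝ E]
    [FiniteDimensional ℝ E] [MeasurableSpace E] [BorelSpace E] [NormedAddCommGroup F]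
    [NormedSpace ℝ F] (μ : Measure E) [μ.IsAddHaarMeasure] {L : E →ₗ[ℝ] E}
    (hL : Function.Injective L) {s : Set E} (hs : MeasurableSet s) (g : E → F) :
    ∫ x in L '' s, g x ∂μ = |LinearMap.det L| • ∫ y in s, g (L y) ∂μ := by
  have hL' (x : E) (_ : x ∈ s) : HasFDerivWithinAt L (LinearMap.toContinuousLinearMap L) s x :=
    (LinearMap.toContinuousLinearMap L).hasFDerivAt.hasFDerivWithinAt
  rw [integral_image_eq_integral_abs_det_fderiv_smul μ hs hL' hL.injOn g, integral_smul]
  rfl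

def circularCone : Set (ℝ × ℝ × ℝ) := {y | 0 < y.1 ∧ y.2.1 ^ 2 + y.2.2 ^ 2 < y.1 ^ 2}

theorem measurableSet_circularCone : MeasurableSet circularCone :=
  (measurableSet_lt measurable_const measurable_fst).inter
    (measurableSet_lt (f := fun y : ℝ × ℝ × ℝ => y.2.1 ^ 2 + y.2.2 ^ 2) (by fun_prop) (by fun_prop))

theorem lintegral_circularCone {f : ℝ → ENNReal} (hf : Measurable f) :
    ∫⁻ y in circularCone, f y.1 = ∫⁻ c in Ioi 0, f c * ENNReal.ofReal (π * c ^ 2) := by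
  rw [← lintegral_indicator measurableSet_circularCone, Measure.volume_eq_prod,
    lintegral_prod (circularCone.indicator fun y => f y.1)
      ((hf.comp measurable_fst).indicator measurableSet_circularCone).aemeasurable,
    ← lintegral_indicator measurableSet_Ioi]
  refine lintegral_congr fun c => ?_
  by_cases hc : 0 < c
  · have hslice : (fun p => circularCone.indicator (fun y => f y.1) (c, p)) =
        {p : ℝ × ℝ | p.1 ^ 2 + p.2 ^ 2 < c ^ 2}.indicator fun _ => f c := by
      ext p
      simp [indicator, circularCone, hc]
    rw [hslice, lintegral_indicator_const (measurableSet_lt (by fun_prop) (by fun_prop)),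
      volume_disk, indicator_of_mem (mem_Ioi.2 hc)]
  · simp [indicator, circularCone, hc]

theorem integral_exp_neg_circularCone : ∫ y in circularCone, exp (-y.1) = 2 * π := by
  have hGamma : (fun c : ℝ => exp (-c) * (π * c ^ 2)) =
      fun c => π * (exp (-c) * c ^ ((3 : ℝ) - 1)) := by
    ext c
    rw [show (3 : ℝ) - 1 = 2 by norm_num, rpow_two]
    ring
  have hint : IntegrableOn (fun c : ℝ => exp (-c) * (π * c ^ 2)) (Ioi 0) := by
    rw [hGamma]
    exact (GammaIntegral_convergent (by norm_num)).const_mul π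
  have hval : ∫ c in Ioi 0, exp (-c) * (π * c ^ 2) = 2 * π := by
    rw [hGamma, integral_const_mul, ← Gamma_eq_integral (by norm_num),
      show (3 : ℝ) = 2 + 1 by norm_num, Gamma_add_one two_ne_zero, Gamma_two, mul_one, mul_comm]
  rw [integral_eq_lintegral_of_nonneg_ae (ae_of_all _ fun _ => (exp_pos _).le) (by fun_prop),
    lintegral_circularCone (f := fun c => ENNReal.ofReal (exp (-c))) (by fun_prop)]
  simp_rw [← ENNReal.ofReal_mul (exp_pos _).le]
  rw [← ofReal_integral_eq_lintegral_ofReal hint (ae_of_all _ fun _ => by positivity), hval,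
    ENNReal.toReal_ofReal (by positivity)]

def LinearEquiv.finThreeArrow (R : Type*) [CommSemiring R] : (Fin 3 → R) ≃ₗ[R] R × R × R :=
  (Fin.consLinearEquiv R fun _ => R).symm.trans
    ((LinearEquiv.refl R R).prodCongr (LinearEquiv.finTwoArrow R R))

noncomputable def planeMatrix (φ₁ φ₂ φ₃ : ℝ) : Matrix (Fin 3) (Fin 3) ℝ :=
  !![1, cos φ₁, sin φ₁; 1, cos φ₂, sin φ₂; 1, cos φ₃, sin φ₃]

noncomputable def planeHeights (φ₁ φ₂ φ₃ : ℝ) : (ℝ × ℝ × ℝ) →ₗ[ℝ] ℝ × ℝ × ℝ :=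
  (LinearEquiv.finThreeArrow ℝ).conj (Matrix.toLin' (planeMatrix φ₁ φ₂ φ₃))

noncomputable def planeDet (φ₁ φ₂ φ₃ : ℝ) : ℝ := sin (φ₃ - φ₂) + sin (φ₁ - φ₃) + sin (φ₂ - φ₁)

section planeHeights

variable (φ₁ φ₂ φ₃ : ℝ) (y : ℝ × ℝ × ℝ)

theorem planeHeights_apply :
    planeHeights φ₁ φ₂ φ₃ y = (y.1 + cos φ₁ * y.2.1 + sin φ₁ * y.2.2,
      y.1 + cos φ₂ * y.2.1 + sin φ₂ * y.2.2, y.1 + cos φ₃ * y.2.1 + sin φ₃ * y.2.2) := by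
  simp [planeHeights, LinearEquiv.conj_apply, planeMatrix, LinearEquiv.finThreeArrow,
    dotProduct, Fin.sum_univ_three]

theorem det_planeHeights : LinearMap.det (planeHeights φ₁ φ₂ φ₃) = planeDet φ₁ φ₂ φ₃ := by
  rw [planeHeights, LinearEquiv.conj_apply, LinearMap.comp_assoc, LinearMap.det_conj,
    LinearMap.det_toLin', planeMatrix, Matrix.det_fin_three]
  simp only [Matrix.of_apply, Matrix.cons_val, Matrix.cons_val_zero, Matrix.cons_val_one,
    planeDet, sin_sub]
  ring

theorem planeHeights_mul_sin_sub :
    (planeHeights φ₁ φ₂ φ₃ y).1 * sin (φ₃ - φ₂) + (planeHeights φ₁ φ₂ φ₃ y).2.1 * sin (φ₁ - φ₃) +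
      (planeHeights φ₁ φ₂ φ₃ y).2.2 * sin (φ₂ - φ₁) = y.1 * planeDet φ₁ φ₂ φ₃ := by
  simp only [planeHeights_apply, planeDet, sin_sub]
  ring

theorem det_planeHeights_sin_one :
    Matrix.det !![(planeHeights φ₁ φ₂ φ₃ y).1, sin φ₁, 1;
      (planeHeights φ₁ φ₂ φ₃ y).2.1, sin φ₂, 1;
      (planeHeights φ₁ φ₂ φ₃ y).2.2, sin φ₃, 1] = y.2.1 * planeDet φ₁ φ₂ φ₃ := by
  simp only [Matrix.det_fin_three, Matrix.of_apply, Matrix.cons_val, Matrix.cons_val_zero,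
    Matrix.cons_val_one, planeHeights_apply, planeDet, sin_sub]
  ring

theorem det_cos_planeHeights_one :
    Matrix.det !![cos φ₁, (planeHeights φ₁ φ₂ φ₃ y).1, 1;
      cos φ₂, (planeHeights φ₁ φ₂ φ₃ y).2.1, 1;
      cos φ₃, (planeHeights φ₁ φ₂ φ₃ y).2.2, 1] = y.2.2 * planeDet φ₁ φ₂ φ₃ := by
  simp only [Matrix.det_fin_three, Matrix.of_apply, Matrix.cons_val, Matrix.cons_val_zero,
    Matrix.cons_val_one, planeHeights_apply, planeDet, sin_sub]
  ring

variable {y}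

theorem planeHeights_pos_of_mem_circularCone (hy : y ∈ circularCone) :
    0 < (planeHeights φ₁ φ₂ φ₃ y).1 ∧ 0 < (planeHeights φ₁ φ₂ φ₃ y).2.1 ∧
      0 < (planeHeights φ₁ φ₂ φ₃ y).2.2 := by
  simp only [planeHeights_apply]
  exact ⟨add_cos_mul_add_sin_mul_pos φ₁ hy.1 hy.2, add_cos_mul_add_sin_mul_pos φ₂ hy.1 hy.2,
    add_cos_mul_add_sin_mul_pos φ₃ hy.1 hy.2⟩

theorem image_planeHeights_circularCone {σ : ℝ × ℝ × ℝ → ℝ × ℝ × ℝ}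
    (hσ : Function.LeftInverse σ (planeHeights φ₁ φ₂ φ₃))
    (hσpos : ∀ A : ℝ × ℝ × ℝ, 0 < A.1 → 0 < A.2.1 → 0 < A.2.2 → 0 < (σ A).1) :
    planeHeights φ₁ φ₂ φ₃ '' circularCone = {A | 0 < A.1 ∧ 0 < A.2.1 ∧ 0 < A.2.2 ∧
      (σ A).2.1 ^ 2 + (σ A).2.2 ^ 2 < (σ A).1 ^ 2} := by
  have hσ' : Function.RightInverse σ (planeHeights φ₁ φ₂ φ₃) :=
    hσ.rightInverse_of_surjective (LinearMap.injective_iff_surjective.mp hσ.injective)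
  rw [image_eq_preimage_of_inverse hσ hσ']
  ext A
  constructor
  · intro hA
    have hpos := planeHeights_pos_of_mem_circularCone φ₁ φ₂ φ₃ hA
    rw [hσ' A] at hpos
    exact ⟨hpos.1, hpos.2.1, hpos.2.2, hA.2⟩
  · rintro ⟨hA₁, hA₂, hA₃, hcone⟩
    exact ⟨hσpos A hA₁ hA₂ hA₃, hcone⟩

end planeHeights

theorem p1_integral (ϑ₁ ϑ₂ ϑ₃ : ℝ)
    (h₁ : ϑ₁ ∈ Set.Ioo 0 π) (h₂ : ϑ₂ ∈ Set.Ioo 0 π) (h₃ : ϑ₃ ∈ Set.Ioo 0 π)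
    (hsum : ϑ₁ + ϑ₂ + ϑ₃ = 2 * π)
    (φ₁ φ₂ φ₃ Δ : ℝ)
    (hφ₁ : φ₁ = 0) (hφ₂ : φ₂ = ϑ₃) (hφ₃ : φ₃ = ϑ₃ + ϑ₁)
    (hΔ : Δ = Real.sin ϑ₁ + Real.sin ϑ₂ + Real.sin ϑ₃)
    (σ₀ σx σy : ℝ × ℝ × ℝ → ℝ)
    (hσ₀ : ∀ A : ℝ × ℝ × ℝ,
      σ₀ A = (A.1 * Real.sin ϑ₁ + A.2.1 * Real.sin ϑ₂ + A.2.2 * Real.sin ϑ₃) / Δ)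
    (hσx : ∀ A : ℝ × ℝ × ℝ,
      σx A = Matrix.det !![A.1, Real.sin φ₁, 1;
                           A.2.1, Real.sin φ₂, 1;
                           A.2.2, Real.sin φ₃, 1] / Δ)
    (hσy : ∀ A : ℝ × ℝ × ℝ,
      σy A = Matrix.det !![Real.cos φ₁, A.1, 1;
                           Real.cos φ₂, A.2.1, 1;
                           Real.cos φ₃, A.2.2, 1] / Δ) :
    (∫ A in {A : ℝ × ℝ × ℝ | 0 < A.1 ∧ 0 < A.2.1 ∧ 0 < A.2.2 ∧
        σx A ^ 2 + σy A ^ 2 < σ₀ A ^ 2},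
      Real.exp (-(σ₀ A)))
    = 8 * π * Real.sin (ϑ₁ / 2) * Real.sin (ϑ₂ / 2) * Real.sin (ϑ₃ / 2) := by
  have hsin₁ := sin_pos_of_pos_of_lt_pi h₁.1 h₁.2
  have hsin₂ := sin_pos_of_pos_of_lt_pi h₂.1 h₂.2
  have hsin₃ := sin_pos_of_pos_of_lt_pi h₃.1 h₃.2
  have hΔpos : 0 < Δ := by linarith
  have hs₁ : sin (φ₃ - φ₂) = sin ϑ₁ := by rw [hφ₂, hφ₃, add_sub_cancel_left]
  have hs₂ : sin (φ₁ - φ₃) = sin ϑ₂ := by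
    rw [hφ₁, hφ₃, show 0 - (ϑ₃ + ϑ₁) = ϑ₂ - 2 * π by linarith, sin_sub_two_pi]
  have hs₃ : sin (φ₂ - φ₁) = sin ϑ₃ := by rw [hφ₁, hφ₂, sub_zero]
  have hD : planeDet φ₁ φ₂ φ₃ = Δ := by rw [planeDet, hs₁, hs₂, hs₃, hΔ]
  set L := planeHeights φ₁ φ₂ φ₃
  set σ : ℝ × ℝ × ℝ → ℝ × ℝ × ℝ := fun A => (σ₀ A, σx A, σy A)
  have hσL : Function.LeftInverse σ L := fun y => by
    simp only [σ, hσ₀, hσx, hσy]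
    rw [← hs₁, ← hs₂, ← hs₃, planeHeights_mul_sin_sub, det_planeHeights_sin_one,
      det_cos_planeHeights_one, hD]
    field_simp
  have hσpos (A : ℝ × ℝ × ℝ) (hA₁ : 0 < A.1) (hA₂ : 0 < A.2.1) (hA₃ : 0 < A.2.2) :
      0 < σ₀ A := by
    rw [hσ₀]
    exact div_pos (by linarith [mul_pos hA₁ hsin₁, mul_pos hA₂ hsin₂, mul_pos hA₃ hsin₃]) hΔpos
  have : (volume : Measure (ℝ × ℝ × ℝ)).IsAddHaarMeasure := by
    rw [Measure.volume_eq_prod]; infer_instance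
  have hσ₀L (y : ℝ × ℝ × ℝ) : σ₀ (L y) = y.1 := congrArg Prod.fst (hσL y)
  rw [← image_planeHeights_circularCone φ₁ φ₂ φ₃ hσL hσpos,
    setIntegral_image_linearMap volume hσL.injective measurableSet_circularCone]
  simp only [hσ₀L]
  rw [integral_exp_neg_circularCone, det_planeHeights, hD, abs_of_pos hΔpos, smul_eq_mul, hΔ,
    sin_add_sin_add_sin_of_add_eq_two_pi hsum]
  ring
end
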